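/- arXiv:1307.6155 — 11 statements merged into one kernel-verified Lean document; each statement's English description precedes it below -/
import Mathlib

section
/- If G is a finite group in which every subgroup is either equal to G or abelian, and G itself is non-abelian, then the order of G has at most two prime divisors. -/
/-!
Suppose three distinct primes `p`, `q`, `r` divide `|G|` and let `P` be a Sylow `p`-subgroup.
Then `P` has a complement `K` with `P` or `K` normal: by Schur–Zassenhaus if `P` is normal, and
otherwise the normalizer of `P` is proper, hence abelian, so it centralizes `P` and Burnside's
transfer theorem gives a normal complement. Both `P` and `K` are proper, hence abelian.
For `s ∈ {q, r}` the elements of `K` of order prime to `s` form a subgroup `K_s`, normal when `K`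
is, and `P ⊔ K_s` is proper since `s` does not divide its order; so `P` centralizes `K_s`.
As `K = K_q K_r` (split each element by Bézout), `P` centralizes `K`, and `G = K P` is abelian.
-/

open Subgroup

namespace Subgroup

variable {G : Type*} [Group G]

theorem index_dvd_card_of_sup_eq_top {A N : Subgroup G} [N.Normal] (h : A ⊔ N = ⊤) :
    N.index ∣ Nat.card A := by
  rw [← relIndex_top_right, ← h, relIndex_sup_right]
  exact relIndex_dvd_card N A

theorem sup_ne_top_of_prime_dvd_card {A N : Subgroup G} [N.Normal] {s : ℕ} (hs : s.Prime)
    (hsG : s ∣ Nat.card G) (hA : ¬ s ∣ Nat.card A) (hN : ¬ s ∣ Nat.card N) : A ⊔ N ≠ ⊤ := by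
  intro h
  rw [← N.card_mul_index] at hsG
  exact (hs.dvd_mul.mp hsG).elim hN fun hs' => hA (hs'.trans (index_dvd_card_of_sup_eq_top h))

theorem mem_zpowers_pow_sup_zpowers_pow {g : G} {a b : ℕ} (hab : a.Coprime b) :
    g ∈ zpowers (g ^ a) ⊔ zpowers (g ^ b) := by
  have hg : (g ^ a) ^ a.gcdA b * (g ^ b) ^ a.gcdB b = g := by
    rw [← zpow_natCast g a, ← zpow_natCast g b, ← zpow_mul, ← zpow_mul, ← zpow_add,
      ← Nat.gcd_eq_gcd_ab, hab, Nat.cast_one, zpow_one]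
  have := mul_mem_sup (zpow_mem (mem_zpowers (g ^ a)) (a.gcdA b))
    (zpow_mem (mem_zpowers (g ^ b)) (a.gcdB b))
  rwa [hg] at this

def coprimeOrderPart (K : Subgroup G) [IsMulCommutative K] (n : ℕ) : Subgroup G where
  carrier := {g | g ∈ K ∧ n.Coprime (orderOf g)}
  one_mem' := ⟨K.one_mem, by simp⟩
  mul_mem' := by
    rintro a b ⟨haK, ha⟩ ⟨hbK, hb⟩
    have hab : Commute a b := congrArg Subtype.val (mul_comm' (⟨a, haK⟩ : K) ⟨b, hbK⟩)
    exact ⟨K.mul_mem haK hbK,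
      (ha.mul_right hb).coprime_dvd_right hab.orderOf_mul_dvd_mul_orderOf⟩
  inv_mem' := by
    rintro a ⟨haK, ha⟩
    exact ⟨K.inv_mem haK, by rwa [orderOf_inv]⟩

variable {K : Subgroup G} [IsMulCommutative K] {n : ℕ}

theorem mem_coprimeOrderPart {g : G} :
    g ∈ K.coprimeOrderPart n ↔ g ∈ K ∧ n.Coprime (orderOf g) :=
  Iff.rfl

instance coprimeOrderPart_normal [K.Normal] : (K.coprimeOrderPart n).Normal where
  conj_mem g hg h :=
    ⟨Normal.conj_mem ‹_› g hg.1 h, by rw [← MulAut.conj_apply, MulEquiv.orderOf_eq]; exact hg.2⟩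

theorem not_dvd_card_coprimeOrderPart [Finite G] {q : ℕ} (hq : q.Prime) :
    ¬ q ∣ Nat.card (K.coprimeOrderPart q) := by
  intro hdvd
  have := Fact.mk hq
  obtain ⟨g, hg⟩ := exists_prime_orderOf_dvd_card' q hdvd
  have := (mem_coprimeOrderPart.mp g.2).2
  rw [orderOf_coe, hg, Nat.coprime_self] at this
  exact hq.one_lt.ne' this

theorem le_coprimeOrderPart_sup [Finite G] {q r : ℕ} (hq : q.Prime) (hr : r.Prime)
    (hqr : q ≠ r) : K ≤ K.coprimeOrderPart q ⊔ K.coprimeOrderPart r := by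
  intro k hk
  set n := orderOf k
  have hn : n ≠ 0 := (orderOf_pos k).ne'
  have hcompl : k ^ ordProj[q] n ∈ K.coprimeOrderPart q := by
    refine ⟨K.pow_mem hk _, ?_⟩
    rw [orderOf_pow, Nat.gcd_eq_right (Nat.ordProj_dvd n q)]
    exact Nat.coprime_ordCompl hq hn
  have hproj : k ^ ordCompl[q] n ∈ K.coprimeOrderPart r := by
    refine ⟨K.pow_mem hk _, ?_⟩
    rw [orderOf_pow, Nat.gcd_eq_right (Nat.ordCompl_dvd n q),
      Nat.div_div_self (Nat.ordProj_dvd n q) hn]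
    exact ((Nat.coprime_primes hr hq).mpr hqr.symm).pow_right _
  exact sup_le_sup (zpowers_le.mpr hcompl) (zpowers_le.mpr hproj)
    (mem_zpowers_pow_sup_zpowers_pow ((Nat.coprime_ordCompl hq hn).pow_left _))

end Subgroup

theorem IsPGroup.not_dvd_card {G : Type*} [Group G] [Finite G] {p q : ℕ} [Fact p.Prime]
    (hG : IsPGroup p G) (hq : q.Prime) (hqp : q ≠ p) : ¬ q ∣ Nat.card G := by
  obtain ⟨n, hn⟩ := IsPGroup.iff_card.mp hG
  rw [hn]
  exact fun h => hqp ((Nat.prime_dvd_prime_iff_eq hq Fact.out).mp (hq.dvd_of_dvd_pow h))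

theorem commute_of_sup_eq_top {G : Type*} [Group G] {H K : Subgroup G} (hHK : H ⊔ K = ⊤)
    [IsMulCommutative H] [IsMulCommutative K] (hcomm : H ≤ centralizer K) :
    ∀ a b : G, a * b = b * a := by
  have hH : H ⊔ K ≤ centralizer H := sup_le H.le_centralizer (le_centralizer_iff.mp hcomm)
  have hK : H ⊔ K ≤ centralizer K := sup_le hcomm K.le_centralizer
  have hsup : H ⊔ K ≤ centralizer (H ⊔ K : Subgroup G) := le_centralizer_iff.mp
    (sup_le (le_centralizer_iff.mp hH) (le_centralizer_iff.mp hK))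
  have htop : (⊤ : Subgroup G) ≤ centralizer (⊤ : Subgroup G) := hHK ▸ hsup
  intro a b
  exact htop (mem_top b) a (mem_top a)

section ProperSubgroupsCommutative

variable {G : Type*} [Group G]

theorem isMulCommutative_of_ne_top (hsub : ∀ H : Subgroup G, H = ⊤ ∨ ∀ a b : H, a * b = b * a)
    {H : Subgroup G} (hH : H ≠ ⊤) : IsMulCommutative H :=
  ⟨⟨(hsub H).resolve_left hH⟩⟩

theorem Sylow.exists_isComplement'_and_normal [Finite G]
    (hsub : ∀ H : Subgroup G, H = ⊤ ∨ ∀ a b : H, a * b = b * a) {p : ℕ} [Fact p.Prime]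
    (P : Sylow p G) :
    ∃ K : Subgroup G, K.IsComplement' P ∧ (K.Normal ∨ (P : Subgroup G).Normal) := by
  by_cases hP : (P : Subgroup G).Normal
  · obtain ⟨K, hK⟩ := exists_left_complement'_of_coprime P.card_coprime_index
    exact ⟨K, hK, .inr hP⟩
  · have : IsMulCommutative (normalizer (P : Subgroup G)) :=
      isMulCommutative_of_ne_top hsub (mt normalizer_eq_top_iff.mp hP)
    have hNP : normalizer (P : Subgroup G) ≤ centralizer (P : Set G) :=
      fun g hg x hx => le_centralizer _ hg x (le_normalizer hx)
    exact ⟨_, MonoidHom.ker_transferSylow_isComplement' P hNP, .inl inferInstance⟩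

theorem IsPGroup.le_centralizer_of_two_primes_dvd_card [Finite G]
    (hsub : ∀ H : Subgroup G, H = ⊤ ∨ ∀ a b : H, a * b = b * a) {p q r : ℕ} [Fact p.Prime]
    {P K : Subgroup G} (hP : IsPGroup p P) [IsMulCommutative K] (hnormal : K.Normal ∨ P.Normal)
    (hq : q.Prime) (hr : r.Prime) (hqG : q ∣ Nat.card G) (hrG : r ∣ Nat.card G)
    (hpq : p ≠ q) (hpr : p ≠ r) (hqr : q ≠ r) : P ≤ centralizer K := by
  have hpart : ∀ s, s.Prime → s ∣ Nat.card G → s ≠ p →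
      P ≤ centralizer (K.coprimeOrderPart s) := by
    intro s hs hsG hsp
    have hne : P ⊔ K.coprimeOrderPart s ≠ ⊤ := by
      rcases hnormal with hK | hP'
      · exact sup_ne_top_of_prime_dvd_card hs hsG (hP.not_dvd_card hs hsp)
          (not_dvd_card_coprimeOrderPart hs)
      · rw [sup_comm]
        exact sup_ne_top_of_prime_dvd_card hs hsG (not_dvd_card_coprimeOrderPart hs)
          (hP.not_dvd_card hs hsp)
    have := isMulCommutative_of_ne_top hsub hne
    exact le_sup_left.trans
      ((P ⊔ _).le_centralizer.trans (centralizer_le (SetLike.coe_subset_coe.mpr le_sup_right)))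
  rw [le_centralizer_iff]
  exact (le_coprimeOrderPart_sup hq hr hqr).trans (sup_le
    (le_centralizer_iff.mp (hpart q hq hqG hpq.symm))
    (le_centralizer_iff.mp (hpart r hr hrG hpr.symm)))

end ProperSubgroupsCommutative

theorem miller_moreno_prime_divisors (G : Type*) [Group G] [Fintype G]
    (hsub : ∀ H : Subgroup G, H = ⊤ ∨ ∀ a b : H, a * b = b * a)
    (hna : ¬ ∀ a b : G, a * b = b * a) :
    (Fintype.card G).primeFactors.card ≤ 2 := by
  by_contra! hcard
  rw [← Nat.card_eq_fintype_card] at hcard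
  obtain ⟨p, hp, q, hq, r, hr, hpq, hpr, hqr⟩ := Finset.two_lt_card.mp hcard
  rw [Nat.mem_primeFactors_of_ne_zero Nat.card_pos.ne'] at hp hq hr
  have := Fact.mk hp.1
  let P : Sylow p G := default
  obtain ⟨K, hKP, hnormal⟩ := P.exists_isComplement'_and_normal hsub
  have hPtop : (P : Subgroup G) ≠ ⊤ := fun h =>
    P.isPGroup'.not_dvd_card hq.1 hpq.symm (by rw [h, card_top]; exact hq.2)
  have hKtop : K ≠ ⊤ := fun h =>
    P.ne_bot_of_dvd_card hp.2 (isComplement'_top_left.mp (h ▸ hKP))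
  have := isMulCommutative_of_ne_top hsub hPtop
  have := isMulCommutative_of_ne_top hsub hKtop
  exact hna (commute_of_sup_eq_top hKP.symm.sup_eq_top
    (P.isPGroup'.le_centralizer_of_two_primes_dvd_card hsub hnormal hq.1 hr.1 hq.2 hr.2
      hpq hpr hqr))
end

section
/- Let G be a finite group such that every element of G of order 2 is central, every element of G has order dividing 4, and any two non-commuting elements of G generate a subgroup isomorphic to the quaternion group Q8. If G is non-abelian, then all elements of order 4 in G have the same square. -/
private lemma q8sq : ∀ u v : QuaternionGroup 2, u^2 = 1 ∨ v^2 = 1 ∨ u^2 = v^2 := by decide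

private lemma sq_ne_one_of_not_comm {G : Type*} [Group G]
    (h2 : ∀ g : G, orderOf g = 2 → g ∈ Subgroup.center G)
    {a b : G} (h : a * b ≠ b * a) : a ^ 2 ≠ 1 := by
  intro hsq
  have hd : orderOf a ∣ 2 := orderOf_dvd_of_pow_eq_one hsq
  rcases (Nat.dvd_prime Nat.prime_two).mp hd with h' | h'
  · have : a = 1 := orderOf_eq_one_iff.mp h'
    exact h (by rw [this]; group)
  · exact h ((Subgroup.mem_center_iff.mp (h2 a h')) b).symm

private lemma sq_eq_of_not_comm {G : Type*} [Group G]
    (hQ8 : ∀ x y : G, x * y ≠ y * x →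
      Nonempty ((Subgroup.closure {x, y} : Subgroup G) ≃* QuaternionGroup 2))
    {x y : G} (hx : x ^ 2 ≠ 1) (hy : y ^ 2 ≠ 1) (h : x * y ≠ y * x) : x ^ 2 = y ^ 2 := by
  obtain ⟨e⟩ := hQ8 x y h
  set H := Subgroup.closure ({x, y} : Set G)
  have hxm : x ∈ H := Subgroup.subset_closure (Set.mem_insert _ _)
  have hym : y ∈ H := Subgroup.subset_closure (Set.mem_insert_of_mem _ rfl)
  set X : H := ⟨x, hxm⟩
  set Y : H := ⟨y, hym⟩
  have hX : (e X) ^ 2 ≠ 1 := by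
    intro hc
    rw [← map_pow, ← map_one e] at hc
    have : X ^ 2 = 1 := e.injective hc
    exact hx (congrArg Subtype.val this)
  have hY : (e Y) ^ 2 ≠ 1 := by
    intro hc
    rw [← map_pow, ← map_one e] at hc
    have : Y ^ 2 = 1 := e.injective hc
    exact hy (congrArg Subtype.val this)
  rcases q8sq (e X) (e Y) with hc | hc | hc
  · exact absurd hc hX
  · exact absurd hc hY
  · rw [← map_pow, ← map_pow] at hc
    have : X ^ 2 = Y ^ 2 := e.injective hc
    exact congrArg Subtype.val this

theorem order_four_elements_same_square (G : Type*) [Group G] [Fintype G]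
    (h2 : ∀ g : G, orderOf g = 2 → g ∈ Subgroup.center G)
    (h4 : ∀ g : G, orderOf g ∣ 4)
    (hQ8 : ∀ x y : G, x * y ≠ y * x →
      Nonempty ((Subgroup.closure {x, y} : Subgroup G) ≃* QuaternionGroup 2))
    (hna : ¬ ∀ a b : G, a * b = b * a) :
    ∀ x y : G, orderOf x = 4 → orderOf y = 4 → x ^ 2 = y ^ 2 := by
  push_neg at hna
  obtain ⟨a, b, hab⟩ := hna
  have ha2 : a ^ 2 ≠ 1 := sq_ne_one_of_not_comm h2 hab
  have hb2 : b ^ 2 ≠ 1 := sq_ne_one_of_not_comm h2 (fun hc => hab hc.symm)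
  -- squares of order-4 elements are central and self-inverse
  have hsqc : ∀ g : G, g ^ 2 ≠ 1 → (g ^ 2) * (g ^ 2) = 1 ∧ g ^ 2 ∈ Subgroup.center G := by
    intro g hg
    have h4g : g ^ 4 = 1 := by
      have := h4 g
      rw [← orderOf_dvd_iff_pow_eq_one]; exact this
    have hsq : (g ^ 2) * (g ^ 2) = 1 := by
      rw [← pow_add]; exact h4g
    refine ⟨hsq, h2 _ ?_⟩
    have hd : orderOf (g ^ 2) ∣ 2 := orderOf_dvd_of_pow_eq_one (by rw [← pow_mul]; exact h4g)
    rcases (Nat.dvd_prime Nat.prime_two).mp hd with h' | h'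
    · exact absurd (orderOf_eq_one_iff.mp h') hg
    · exact h'
  -- main claim: any g with g^2 ≠ 1 has g^2 = a^2
  have key : ∀ g : G, g ^ 2 ≠ 1 → g ^ 2 = a ^ 2 := by
    intro g hg
    by_cases hga : g * a = a * g
    · by_cases hgb : g * b = b * g
      · by_contra hne
        have h1 := (hsqc a ha2).1
        have hzz : (g * a) ^ 2 = g ^ 2 * a ^ 2 := by
          rw [pow_two, show g * a * (g * a) = g * (a * g) * a from by group, ← hga,
            pow_two, pow_two]; group
        have hz2 : (g * a) ^ 2 ≠ 1 := by
          rw [hzz]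
          intro hc
          exact hne (mul_right_cancel (a := a ^ 2) (by rw [hc, h1])).symm
        have hzb : (g * a) * b ≠ b * (g * a) := by
          intro hc
          apply hab
          have : g * (a * b) = g * (b * a) := by
            calc g * (a * b) = (g * a) * b := by group
              _ = b * (g * a) := hc
              _ = (b * g) * a := by group
              _ = (g * b) * a := by rw [hgb]
              _ = g * (b * a) := by group
          exact mul_left_cancel this
        have := sq_eq_of_not_comm hQ8 hz2 hb2 hzb
        have hba2 : b ^ 2 = a ^ 2 := sq_eq_of_not_comm hQ8 hb2 ha2 (fun hc => hab hc.symm)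
        rw [hzz, hba2] at this
        exact hg (mul_right_cancel (b := a ^ 2) (by rw [this, one_mul]))
      · have := sq_eq_of_not_comm hQ8 hg hb2 hgb
        rw [this]
        exact sq_eq_of_not_comm hQ8 hb2 ha2 (fun hc => hab hc.symm)
    · exact sq_eq_of_not_comm hQ8 hg ha2 hga
  intro x y hx hy
  have hx2 : x ^ 2 ≠ 1 := by
    intro hc
    have := orderOf_dvd_of_pow_eq_one hc
    rw [hx] at this; norm_num at this
  have hy2 : y ^ 2 ≠ 1 := by
    intro hc
    have := orderOf_dvd_of_pow_eq_one hc
    rw [hy] at this; norm_num at this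
  rw [key x hx2, key y hy2]
end

section
/- Let G be a finite 2-group in which every element of order 2 is central and in which any two non-commuting elements generate a subgroup isomorphic to Q8. If G is non-abelian, then G is isomorphic to Q8 × (Z/2)^d for some d ≥ 0. -/
/-!
If any two non-commuting elements generate `Q₈`, then non-commuting `x, y` satisfy
`x ^ 2 = y ^ 2 ≠ 1` and `y x y⁻¹ = x⁻¹`. Comparing `(z x) ^ 2` with `y ^ 2` shows that every
central `z` has `z ^ 2 = 1`, and comparing `(g w) ^ 2` with `h ^ 2` shows that two elements
commuting with some `w` with `w ^ 2 ≠ 1` commute; hence the centralizer of `x` and `y` is the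
centre. Every element acts on `x` and on `y` by conjugation as some element of `H = ⟨x, y⟩` does,
so `G = H Z(G)`. Finally `Z(G)` is a vector space over `𝔽₂`, and a complement `W` of `H ∩ Z(G)`
in it gives `G ≃ H × W`.
-/

open Subgroup

section ElementaryAbelian

variable {A : Type*} [CommGroup A]

abbrev zmodTwoModuleOfSqEqOne (hA : ∀ a : A, a ^ 2 = 1) : Module (ZMod 2) (Additive A) :=
  AddCommGroup.zmodModule fun a => congrArg Additive.ofMul (hA a.toMul)

theorem exists_isCompl_of_sq_eq_one (hA : ∀ a : A, a ^ 2 = 1) (U : Subgroup A) :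
    ∃ W : Subgroup A, IsCompl U W := by
  let := zmodTwoModuleOfSqEqOne hA
  let e : Subgroup A ≃o Submodule (ZMod 2) (Additive A) :=
    Subgroup.toAddSubgroup.trans (AddSubgroup.toZModSubmodule 2)
  obtain ⟨W, hW⟩ := (e U).exists_isCompl
  exact ⟨e.symm W, by simpa using e.symm.isCompl hW⟩

theorem exists_mulEquiv_of_sq_eq_one [Finite A] (hA : ∀ a : A, a ^ 2 = 1) :
    ∃ d : ℕ, Nonempty (A ≃* Multiplicative (Fin d → ZMod 2)) := by
  let := zmodTwoModuleOfSqEqOne hA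
  exact ⟨_, ⟨AddEquiv.toMultiplicativeRight
    (Module.finBasis (ZMod 2) (Additive A)).equivFun.toAddEquiv⟩⟩

end ElementaryAbelian

section Splitting

variable {G : Type*} [Group G]

noncomputable def Subgroup.prodMulEquivOfIsCompl {H K : Subgroup G}
    (hcomm : ∀ h ∈ H, ∀ k ∈ K, Commute h k) (hHK : IsCompl H K) : H × K ≃* G :=
  MulEquiv.ofBijective (H.subtype.noncommCoprod K.subtype fun h k => hcomm h h.2 k k.2) <| by
    refine ⟨(injective_iff_map_eq_one _).2 fun ⟨h, k⟩ hhk => ?_, ?_⟩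
    · have hk : (k : G) = (h : G)⁻¹ := eq_inv_of_mul_eq_one_right hhk
      have hkH : (k : G) ∈ H ⊓ K := ⟨hk ▸ H.inv_mem h.2, k.2⟩
      rw [hHK.inf_eq_bot, mem_bot] at hkH
      have hh : (h : G) = 1 := by simpa [hkH] using hk.symm
      exact Prod.ext (Subtype.ext hh) (Subtype.ext hkH)
    · rw [← MonoidHom.range_eq_top, eq_top_iff, ← hHK.sup_eq_top, sup_le_iff]
      exact ⟨fun h hh => ⟨(⟨h, hh⟩, 1), mul_one h⟩,
        fun k hk => ⟨(1, ⟨k, hk⟩), one_mul k⟩⟩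

open scoped IsMulCommutative in
theorem exists_mulEquiv_prod_of_sup_center_eq_top [Finite G] (H : Subgroup G)
    (hZ : ∀ z ∈ center G, z ^ 2 = 1) (hHZ : H ⊔ center G = ⊤) :
    ∃ d : ℕ, Nonempty (G ≃* H × Multiplicative (Fin d → ZMod 2)) := by
  have hA : ∀ z : center G, z ^ 2 = 1 := fun z => Subtype.ext (hZ z z.2)
  obtain ⟨W, hW⟩ := exists_isCompl_of_sq_eq_one hA (H.subgroupOf (center G))
  obtain ⟨d, ⟨eW⟩⟩ := exists_mulEquiv_of_sq_eq_one fun w : W => Subtype.ext (hA w)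
  set K := W.map (center G).subtype
  have hHK : IsCompl H K := by
    constructor
    · rw [disjoint_iff_inf_le]
      rintro _ ⟨hg, w, hw, rfl⟩
      have : w ∈ H.subgroupOf (center G) ⊓ W := ⟨hg, hw⟩
      rw [hW.inf_eq_bot, mem_bot] at this
      simp [this]
    · rw [codisjoint_iff, eq_top_iff, ← hHZ]
      refine sup_le le_sup_left ?_
      calc center G = (⊤ : Subgroup (center G)).map (center G).subtype := by
            rw [← MonoidHom.range_eq_map, range_subtype]
        _ = H ⊓ center G ⊔ K := by
            rw [← hW.sup_eq_top, Subgroup.map_sup, subgroupOf_map_subtype]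
        _ ≤ H ⊔ K := sup_le_sup_right inf_le_left _
  have hcomm : ∀ h ∈ H, ∀ k ∈ K, Commute h k := fun h _ k hk =>
    mem_center_iff.1 (map_subtype_le W hk) h
  exact ⟨d, ⟨(prodMulEquivOfIsCompl hcomm hHK).symm.trans <| MulEquiv.prodCongr (.refl H) <|
    (W.equivMapOfInjective _ Subtype.val_injective).symm.trans eW⟩⟩

end Splitting

theorem QuaternionGroup.relations_of_not_commute : ∀ u v : QuaternionGroup 2, ¬Commute u v →
    u ^ 2 = v ^ 2 ∧ u ^ 2 ≠ 1 ∧ v * u * v⁻¹ = u⁻¹ := by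
  unfold Commute SemiconjBy
  decide

def NoncommutingPairsGenerateQ8 (G : Type*) [Group G] : Prop :=
  ∀ x y : G, x * y ≠ y * x → Nonempty (closure {x, y} ≃* QuaternionGroup 2)

section Quaternion

variable {G : Type*} [Group G]

theorem relations_of_closure_mulEquiv_quaternionGroup {x y : G} (hxy : ¬Commute x y)
    (e : closure {x, y} ≃* QuaternionGroup 2) :
    x ^ 2 = y ^ 2 ∧ x ^ 2 ≠ 1 ∧ y * x * y⁻¹ = x⁻¹ := by
  let f := (closure {x, y}).subtype.comp e.symm.toMonoidHom
  have hf : Function.Injective f := Subtype.val_injective.comp e.symm.injective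
  have hx : f (e ⟨x, subset_closure (by simp)⟩) = x := by simp [f]
  have hy : f (e ⟨y, subset_closure (by simp)⟩) = y := by simp [f]
  generalize e _ = u at hx
  generalize e _ = v at hy
  rw [← hx, ← hy] at hxy ⊢
  have := QuaternionGroup.relations_of_not_commute u v fun h => hxy (h.map f)
  simpa only [← map_pow, ← map_mul, ← map_inv, hf.eq_iff, ne_eq, map_eq_one_iff f hf]
    using this

theorem commute_mul_of_conj_eq_inv {a b x : G} (ha : a * x * a⁻¹ = x⁻¹)
    (hb : b * x * b⁻¹ = x⁻¹) : Commute (a * b) x := by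
  rw [commute_iff_eq, ← mul_inv_eq_iff_eq_mul]
  calc a * b * x * (a * b)⁻¹ = a * (b * x * b⁻¹) * a⁻¹ := by group
    _ = (a * x * a⁻¹)⁻¹ := by rw [hb]; group
    _ = x := by rw [ha, inv_inv]

namespace NoncommutingPairsGenerateQ8

variable {x y : G}

theorem sq_eq_sq (hG : NoncommutingPairsGenerateQ8 G) (hxy : ¬Commute x y) : x ^ 2 = y ^ 2 :=
  (relations_of_closure_mulEquiv_quaternionGroup hxy (hG x y hxy).some).1

theorem sq_ne_one (hG : NoncommutingPairsGenerateQ8 G) (hxy : ¬Commute x y) : x ^ 2 ≠ 1 :=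
  (relations_of_closure_mulEquiv_quaternionGroup hxy (hG x y hxy).some).2.1

theorem conj_eq_inv (hG : NoncommutingPairsGenerateQ8 G) (hxy : ¬Commute x y) :
    y * x * y⁻¹ = x⁻¹ :=
  (relations_of_closure_mulEquiv_quaternionGroup hxy (hG x y hxy).some).2.2

theorem commute_of_commute_of_sq_ne_one (hG : NoncommutingPairsGenerateQ8 G) {g h w : G}
    (hw : w ^ 2 ≠ 1) (hgw : Commute g w) (hhw : Commute h w) : Commute g h := by
  by_contra hgh
  have hgwh : ¬Commute (g * w) h := fun hc => hgh (by simpa using hc.mul_left hhw.symm.inv_left)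
  apply hw
  apply mul_left_cancel (a := g ^ 2)
  rw [← hgw.mul_pow, hG.sq_eq_sq hgwh, hG.sq_eq_sq hgh, mul_one]

theorem sq_eq_one_of_mem_center (hG : NoncommutingPairsGenerateQ8 G) (hxy : ¬Commute x y)
    {z : G} (hz : z ∈ center G) : z ^ 2 = 1 := by
  have hzx : ¬Commute (z * x) y := fun hc =>
    hxy (by simpa using ((inv_mem hz).comm y).mul_left hc)
  apply mul_right_cancel (b := x ^ 2)
  rw [← (hz.comm x).mul_pow, hG.sq_eq_sq hzx, hG.sq_eq_sq hxy, one_mul]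

theorem mem_center_of_commute (hG : NoncommutingPairsGenerateQ8 G) (hxy : ¬Commute x y) {g : G}
    (hgx : Commute g x) (hgy : Commute g y) : g ∈ center G := by
  refine mem_center_iff.2 fun h => ?_
  by_contra hhg
  change ¬Commute h g at hhg
  have hhx : ¬Commute x h := fun hc =>
    hhg (hG.commute_of_commute_of_sq_ne_one (hG.sq_ne_one hxy) hc.symm hgx)
  have hhyx : Commute (h * y) x :=
    commute_mul_of_conj_eq_inv (hG.conj_eq_inv hhx) (hG.conj_eq_inv hxy)
  have hhyg : Commute (h * y) g := hG.commute_of_commute_of_sq_ne_one (hG.sq_ne_one hxy) hhyx hgx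
  exact hhg (by simpa using hhyg.mul_left hgy.symm.inv_left)

theorem closure_sup_center_eq_top (hG : NoncommutingPairsGenerateQ8 G) (hxy : ¬Commute x y) :
    closure {x, y} ⊔ center G = ⊤ := by
  have hx : x ∈ closure {x, y} := subset_closure (by simp)
  have hy : y ∈ closure {x, y} := subset_closure (by simp)
  refine eq_top_iff.2 fun g _ => ?_
  obtain ⟨a, ha, hax⟩ : ∃ a ∈ closure {x, y}, Commute (a * g) x := by
    by_cases hgx : Commute g x
    · exact ⟨1, one_mem _, by simpa using hgx⟩
    · exact ⟨y, hy,
        commute_mul_of_conj_eq_inv (hG.conj_eq_inv hxy) (hG.conj_eq_inv (hgx ·.symm))⟩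
  obtain ⟨b, hb, hbx, hby⟩ :
      ∃ b ∈ closure {x, y}, Commute (b * (a * g)) x ∧ Commute (b * (a * g)) y := by
    by_cases hgy : Commute (a * g) y
    · exact ⟨1, one_mem _, by simpa using hax, by simpa using hgy⟩
    · exact ⟨x, hx, (Commute.refl x).mul_left hax,
        commute_mul_of_conj_eq_inv (hG.conj_eq_inv (hxy ·.symm)) (hG.conj_eq_inv (hgy ·.symm))⟩
  have hg : g = (b * a)⁻¹ * (b * (a * g)) := by group
  rw [hg]
  exact mul_mem (mem_sup_left (inv_mem (mul_mem hb ha)))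
    (mem_sup_right (hG.mem_center_of_commute hxy hbx hby))

end NoncommutingPairsGenerateQ8

end Quaternion

theorem nonabelian_two_group_classification_general (G : Type*) [Group G] [Fintype G]
    (hQ8 : ∀ x y : G, x * y ≠ y * x →
      Nonempty ((Subgroup.closure {x, y} : Subgroup G) ≃* QuaternionGroup 2))
    (hna : ¬ ∀ a b : G, a * b = b * a) :
    ∃ d : ℕ, Nonempty (G ≃* QuaternionGroup 2 × Multiplicative (Fin d → ZMod 2)) := by
  have hG : NoncommutingPairsGenerateQ8 G := hQ8
  obtain ⟨x, y, hxy⟩ : ∃ x y : G, ¬Commute x y := by simpa [commute_iff_eq] using hna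
  obtain ⟨d, ⟨f⟩⟩ := exists_mulEquiv_prod_of_sup_center_eq_top (closure {x, y})
    (fun _ => hG.sq_eq_one_of_mem_center hxy) (hG.closure_sup_center_eq_top hxy)
  exact ⟨d, ⟨f.trans ((hG x y hxy).some.prodCongr (.refl _))⟩⟩

theorem nonabelian_two_group_classification (G : Type*) [Group G] [Fintype G]
    (hp : IsPGroup 2 G)
    (h2 : ∀ g : G, orderOf g = 2 → g ∈ Subgroup.center G)
    (hQ8 : ∀ x y : G, x * y ≠ y * x →
      Nonempty ((Subgroup.closure {x, y} : Subgroup G) ≃* QuaternionGroup 2))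
    (hna : ¬ ∀ a b : G, a * b = b * a) :
    ∃ d : ℕ, Nonempty (G ≃* QuaternionGroup 2 × Multiplicative (Fin d → ZMod 2)) :=
  nonabelian_two_group_classification_general G hQ8 hna
end

section
/- Let G be a finite group in which any two elements of order 3 generate an abelian subgroup, and in which every element has order dividing 12 with no elements of order 9. Then the set of elements of G whose order divides 3 forms a normal (abelian) subgroup of G, which is the unique Sylow 3-subgroup of G. -/
theorem normal_sylow_three_subgroup (G : Type*) [Group G] [Fintype G]
    (h3 : ∀ x y : G, orderOf x = 3 → orderOf y = 3 →
      ∀ a b : (Subgroup.closure {x, y} : Subgroup G), a * b = b * a)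
    (h12 : ∀ g : G, orderOf g ∣ 12)
    (h9 : ∀ g : G, orderOf g ≠ 9) :
    ∃ H : Subgroup G, (H : Set G) = {g : G | g ^ 3 = 1} ∧ H.Normal ∧
      (∀ a b : H, a * b = b * a) ∧ ∀ P : Sylow 3 G, (P : Subgroup G) = H := by
  have hcomm : ∀ x y : G, x ^ 3 = 1 → y ^ 3 = 1 → x * y = y * x := by
    intro x y hx hy
    rcases eq_or_ne x 1 with rfl | hx1; · simp
    rcases eq_or_ne y 1 with rfl | hy1; · simp
    have hox : orderOf x = 3 := by
      rcases (Nat.prime_three.eq_one_or_self_of_dvd _ (orderOf_dvd_of_pow_eq_one hx)) with h | h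
      · exact absurd (orderOf_eq_one_iff.mp h) hx1
      · exact h
    have hoy : orderOf y = 3 := by
      rcases (Nat.prime_three.eq_one_or_self_of_dvd _ (orderOf_dvd_of_pow_eq_one hy)) with h | h
      · exact absurd (orderOf_eq_one_iff.mp h) hy1
      · exact h
    have hxm : x ∈ Subgroup.closure ({x, y} : Set G) :=
      Subgroup.subset_closure (Set.mem_insert _ _)
    have hym : y ∈ Subgroup.closure ({x, y} : Set G) :=
      Subgroup.subset_closure (Set.mem_insert_of_mem _ rfl)
    exact congrArg Subtype.val (h3 x y hox hoy ⟨x, hxm⟩ ⟨y, hym⟩)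
  let H : Subgroup G :=
    { carrier := {g : G | g ^ 3 = 1}
      one_mem' := by simp
      mul_mem' := by
        intro a b ha hb
        have hc : Commute a b := hcomm a b ha hb
        simp only [Set.mem_setOf_eq] at ha hb ⊢
        rw [hc.mul_pow 3, ha, hb, one_mul]
      inv_mem' := by
        intro a ha
        simp only [Set.mem_setOf_eq] at ha ⊢
        rw [inv_pow, ha, inv_one] }
  have hmem : ∀ g : G, g ∈ H ↔ g ^ 3 = 1 := fun g => Iff.rfl
  refine ⟨H, rfl, ?_, ?_, ?_⟩
  · constructor
    intro n hn g
    rw [hmem] at hn ⊢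
    rw [conj_pow, hn, mul_one, mul_inv_cancel]
  · intro a b
    exact Subtype.ext (hcomm a b a.2 b.2)
  · intro P
    have hPG : IsPGroup 3 (P : Subgroup G) := P.isPGroup'
    have hPH : (P : Subgroup G) ≤ H := by
      intro g hg
      obtain ⟨k, hk⟩ := (IsPGroup.iff_orderOf.mp hPG) ⟨g, hg⟩
      rw [Subgroup.orderOf_mk] at hk
      have hkle : k ≤ 1 := by
        by_contra hk2
        push_neg at hk2
        have h9d : (9 : ℕ) ∣ orderOf g := hk ▸
          dvd_trans (by norm_num : (9:ℕ) ∣ 3^2) (pow_dvd_pow 3 hk2)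
        have : (9 : ℕ) ∣ 12 := dvd_trans h9d (h12 g)
        norm_num at this
      have hdvd : orderOf g ∣ 3 := by
        rw [hk]
        calc (3:ℕ) ^ k ∣ 3 ^ 1 := pow_dvd_pow 3 hkle
        _ = 3 := pow_one 3
      exact (hmem g).mpr (orderOf_dvd_iff_pow_eq_one.mp hdvd)
    have hHp : IsPGroup 3 H := by
      intro g
      refine ⟨1, Subtype.ext ?_⟩
      have hg := (hmem g.1).mp g.2
      push_cast
      simpa using hg
    exact (P.3 hHp hPH).symm
end

section
/- Let G be a finite group with a symmetric subset S (i.e., S = S⁻¹, 1 ∉ S) generating G. If the Cayley graph Cay(G,S) has all eigenvalues integral and is not bipartite, then |G| divides (2|S|-1)!. -/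
open Classical in
/-- Adjacency matrix of the Cayley graph `Cay(G,S)`: `x ~ y` iff `x * y⁻¹ ∈ S`. -/
noncomputable def cayleyMatrix {G : Type*} [Group G] (S : Set G) : Matrix G G ℝ :=
  fun x y => if x * y⁻¹ ∈ S then 1 else 0

/-- All eigenvalues of the real matrix `A` are integers. -/
noncomputable def isIntegralMatrix {n : Type*} [Finite n] (A : Matrix n n ℝ) : Prop :=
  letI := Fintype.ofFinite n
  letI := Classical.decEq n
  ∀ μ : ℝ, Module.End.HasEigenvalue (Matrix.toLin' A) μ → ∃ z : ℤ, μ = (z : ℝ)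

/-!
Let `A` be the adjacency matrix of `Cay(G,S)` and `k = |S|`. Because the graph is connected,
the `k`-eigenvectors of `A` are the constant vectors; because it is moreover not bipartite, `-k`
is not an eigenvalue. The eigenvalues are therefore integers in `(-k, k]`, so the symmetric
matrix `A` is annihilated by `(X - k) p` with `p = ∏_{-k < j < k} (X - j)`. Every column of the
symmetric integer matrix `p(A)` is then a `k`-eigenvector, hence `p(A)` is the constant matrix
with some entry `c ∈ ℤ`; comparing its row sums with `p(k) = (2k-1)!` gives `|G| c = (2k-1)!`.
-/

open Finset Matrix Polynomial

theorem Finset.eq_of_abs_le_of_sum_eq {ι : Type*} {s : Finset ι} {f : ι → ℝ} {b : ℝ}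
    (hle : ∀ i ∈ s, |f i| ≤ |b|) (hsum : ∑ i ∈ s, f i = #s * b) : ∀ i ∈ s, f i = b := by
  have hmul : ∀ i ∈ s, b * f i ≤ b * b := fun i hi =>
    calc b * f i ≤ |b| * |f i| := by rw [← abs_mul]; exact le_abs_self _
      _ ≤ |b| * |b| := mul_le_mul_of_nonneg_left (hle i hi) (abs_nonneg b)
      _ = b * b := abs_mul_abs_self b
  have heq : ∀ i ∈ s, b * f i = b * b := by
    refine (sum_eq_sum_iff_of_le hmul).mp ?_
    rw [← mul_sum, hsum, sum_const, nsmul_eq_mul]; ring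
  intro i hi
  rcases eq_or_ne b 0 with rfl | hb
  · simpa using hle i hi
  · exact mul_left_cancel₀ hb (heq i hi)

theorem Subgroup.forall_of_closure_eq_top {G : Type*} [Group G] {S : Set G}
    (hsym : ∀ s ∈ S, s⁻¹ ∈ S) (hgen : closure S = ⊤) {P : G → Prop}
    (hP : ∀ x, P x → ∀ s ∈ S, P (s⁻¹ * x)) {x₀ : G} (h₀ : P x₀) (x : G) : P x := by
  have hx : x * x₀⁻¹ ∈ closure S := hgen ▸ mem_top _
  simpa using closure_induction_left (p := fun g _ => P (g * x₀)) (by simpa)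
    (fun s hs y _ hy => by simpa [mul_assoc] using hP _ hy _ (hsym s hs))
    (fun s hs y _ hy => by simpa [mul_assoc] using hP _ hy s hs) hx

theorem prod_Ioo_neg_sub_eq_factorial (k : ℕ) :
    ∏ j ∈ Ioo (-(k : ℤ)) k, ((k : ℤ) - j) = (2 * k - 1).factorial := by
  rw [← prod_range_add_one_eq_factorial, Nat.cast_prod]
  refine prod_nbij' (fun j => (k - j - 1).toNat) (fun i => k - (i + 1)) ?_ ?_ ?_ ?_ ?_ <;>
    intros <;> simp_all <;> omega

theorem Matrix.aeval_mulVec_eq_smul_of_mulVec_eq_smul {n R : Type*} [Fintype n] [DecidableEq n]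
    [CommRing R] {A : Matrix n n R} {μ : R} {v : n → R} (hv : A *ᵥ v = μ • v) (q : R[X]) :
    aeval A q *ᵥ v = q.eval μ • v := by
  have := Module.End.aeval_apply_of_mem_apply_eq_smul (f := toLinAlgEquiv' A) (p := q)
    (by simpa using hv)
  rwa [aeval_algHom_apply, toLinAlgEquiv'_apply] at this

theorem Matrix.IsHermitian.aeval_eq_zero_of_forall_mem_spectrum {n 𝕜 : Type*} [Fintype n]
    [DecidableEq n] [RCLike 𝕜] {A : Matrix n n 𝕜} (hA : A.IsHermitian) {q : ℝ[X]}
    (hq : ∀ μ ∈ spectrum ℝ A, q.eval μ = 0) : aeval A q = 0 := by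
  rw [← cfc_polynomial q A hA.isSelfAdjoint, cfc_congr (g := 0) hq, cfc_zero]

theorem Matrix.IsHermitian.aeval {n 𝕜 : Type*} [Fintype n] [DecidableEq n] [RCLike 𝕜]
    {A : Matrix n n 𝕜} (hA : A.IsHermitian) (q : ℝ[X]) : (aeval A q).IsHermitian := by
  rw [← cfc_polynomial q A hA.isSelfAdjoint]
  exact cfc_predicate _ A

theorem isIntegralMatrix.exists_int_eq_of_mem_spectrum {n : Type*} [Fintype n] [DecidableEq n]
    {A : Matrix n n ℝ} (hA : isIntegralMatrix A) {μ : ℝ} (hμ : μ ∈ spectrum ℝ A) :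
    ∃ z : ℤ, μ = z := by
  rw [← spectrum_toLin', ← Module.End.hasEigenvalue_iff_mem_spectrum] at hμ
  rw [isIntegralMatrix, Subsingleton.elim (Fintype.ofFinite n) ‹_›,
    Subsingleton.elim (Classical.decEq n) ‹_›] at hA
  exact hA μ hμ

section Cayley

variable {G : Type*} [Group G] {S : Finset G}

theorem cayleyMatrix_isHermitian (hsym : ∀ s ∈ S, s⁻¹ ∈ S) :
    (cayleyMatrix (S : Set G)).IsHermitian := by
  ext x y
  have : y * x⁻¹ ∈ S ↔ x * y⁻¹ ∈ S :=
    ⟨fun h => by simpa using hsym _ h, fun h => by simpa using hsym _ h⟩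
  simp only [cayleyMatrix, conjTranspose_apply, star_trivial]
  split_ifs <;> simp_all

variable [Fintype G]

theorem cayleyMatrix_mulVec_apply (v : G → ℝ) (x : G) :
    (cayleyMatrix (S : Set G) *ᵥ v) x = ∑ s ∈ S, v (s⁻¹ * x) := by
  classical
  calc (cayleyMatrix (S : Set G) *ᵥ v) x = ∑ y, if x * y⁻¹ ∈ S then v y else 0 := by
        simp [mulVec, dotProduct, cayleyMatrix]
    _ = ∑ s, if s ∈ S then v (s⁻¹ * x) else 0 :=
        (Fintype.sum_equiv ((Equiv.inv G).trans (Equiv.mulRight x)) _ _ (by simp)).symm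
    _ = ∑ s ∈ S, v (s⁻¹ * x) := by rw [sum_ite_mem, univ_inter]

theorem exists_intCast_eq_aeval_cayleyMatrix_apply [DecidableEq G] (p : ℤ[X]) (x y : G) :
    ∃ c : ℤ, aeval (cayleyMatrix (S : Set G)) p x y = c := by
  have : cayleyMatrix (S : Set G) =
      (Algebra.ofId ℤ ℝ).mapMatrix (of fun x y : G => if x * y⁻¹ ∈ S then (1 : ℤ) else 0) := by
    ext x y; simp [cayleyMatrix, apply_ite]
  rw [this, aeval_algHom_apply]
  exact ⟨_, rfl⟩

theorem sum_aeval_cayleyMatrix_apply [DecidableEq G] (q : ℤ[X]) (x : G) :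
    ∑ y, aeval (cayleyMatrix (S : Set G)) q x y = q.eval (#S : ℤ) := by
  have hones : cayleyMatrix (S : Set G) *ᵥ (fun _ => 1) = (#S : ℝ) • fun _ => 1 :=
    funext fun x => by simp [cayleyMatrix_mulVec_apply]
  have := congrFun (aeval_mulVec_eq_smul_of_mulVec_eq_smul hones (q.map (algebraMap ℤ ℝ))) x
  rw [aeval_map_algebraMap, ← Int.cast_natCast, eval_intCast_map] at this
  simpa [mulVec, dotProduct] using this

theorem abs_le_card_of_cayleyMatrix_mulVec_eq_smul {μ : ℝ} {v : G → ℝ} (hv₀ : v ≠ 0)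
    (hv : cayleyMatrix (S : Set G) *ᵥ v = μ • v) : |μ| ≤ #S := by
  have : Nonempty G := ⟨1⟩
  obtain ⟨x, hx⟩ := Finite.exists_max fun y => |v y|
  have hpos : 0 < |v x| := by
    refine (abs_nonneg _).lt_of_ne fun h => hv₀ (funext fun y => ?_)
    simpa [← h] using hx y
  refine le_of_mul_le_mul_right ?_ hpos
  calc |μ| * |v x| = |∑ s ∈ S, v (s⁻¹ * x)| := by
        rw [← cayleyMatrix_mulVec_apply, hv, Pi.smul_apply, smul_eq_mul, abs_mul]
    _ ≤ ∑ s ∈ S, |v (s⁻¹ * x)| := abs_sum_le_sum_abs _ _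
    _ ≤ ∑ _s ∈ S, |v x| := sum_le_sum fun s _ => hx _
    _ = #S * |v x| := by rw [sum_const, nsmul_eq_mul]

theorem apply_inv_mul_eq_of_cayleyMatrix_mulVec_eq_smul (hsym : ∀ s ∈ S, s⁻¹ ∈ S)
    (hgen : Subgroup.closure (S : Set G) = ⊤) {ε : ℝ} (hε : |ε| = 1) {v : G → ℝ}
    (hv : cayleyMatrix (S : Set G) *ᵥ v = (ε * #S) • v) :
    ∀ x, ∀ s ∈ S, v (s⁻¹ * x) = ε * v x := by
  -- Maximum principle: where `|v|` is maximal, equality holds in the triangle inequality.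
  have step : ∀ x, (∀ y, |v y| ≤ |v x|) → ∀ s ∈ S, v (s⁻¹ * x) = ε * v x := by
    intro x hx
    refine eq_of_abs_le_of_sum_eq (fun s _ => ?_) ?_
    · rw [abs_mul, hε, one_mul]; exact hx _
    · rw [← cayleyMatrix_mulVec_apply, hv, Pi.smul_apply, smul_eq_mul]; ring
  have : Nonempty G := ⟨1⟩
  obtain ⟨x₀, hx₀⟩ := Finite.exists_max fun y => |v y|
  have hmax : ∀ x y, |v y| ≤ |v x| := by
    refine Subgroup.forall_of_closure_eq_top hsym hgen (fun x hx s hs => ?_) hx₀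
    rwa [step x hx s hs, abs_mul, hε, one_mul]
  exact fun x => step x (hmax x)

theorem eq_of_cayleyMatrix_mulVec_eq_card_smul (hsym : ∀ s ∈ S, s⁻¹ ∈ S)
    (hgen : Subgroup.closure (S : Set G) = ⊤) {v : G → ℝ}
    (hv : cayleyMatrix (S : Set G) *ᵥ v = (#S : ℝ) • v) (x y : G) : v x = v y := by
  have hstep := apply_inv_mul_eq_of_cayleyMatrix_mulVec_eq_smul hsym hgen (ε := 1) (by simp)
    (by rwa [one_mul])
  exact Subgroup.forall_of_closure_eq_top hsym hgen (P := fun x => v x = v y)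
    (fun x hx s hs => by rw [hstep x s hs, one_mul, hx]) rfl x

theorem eq_zero_of_cayleyMatrix_mulVec_eq_neg_card_smul (hsym : ∀ s ∈ S, s⁻¹ ∈ S)
    (hgen : Subgroup.closure (S : Set G) = ⊤)
    (hnb : ¬ ∃ f : G → Bool, ∀ x y : G, x * y⁻¹ ∈ S → f x ≠ f y) {v : G → ℝ}
    (hv : cayleyMatrix (S : Set G) *ᵥ v = (-#S : ℝ) • v) : v = 0 := by
  have hstep := apply_inv_mul_eq_of_cayleyMatrix_mulVec_eq_smul hsym hgen (ε := -1) (by simp)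
    (by rwa [neg_one_mul])
  by_contra hv₀
  obtain ⟨x₀, hx₀⟩ := Function.ne_iff.mp hv₀
  have hne : ∀ x, v x ≠ 0 := Subgroup.forall_of_closure_eq_top hsym hgen
    (fun x hx s hs => by simpa [hstep x s hs] using hx) hx₀
  refine hnb ⟨fun x => decide (0 < v x), fun x y hxy => ?_⟩
  have hy : v y = -v x := by simpa using hstep x _ hxy
  rcases (hne x).lt_or_gt with h | h <;> simp [hy, h, h.le]

theorem cayleyMatrix_spectrum_subset_Ioc [DecidableEq G] (hsym : ∀ s ∈ S, s⁻¹ ∈ S)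
    (hgen : Subgroup.closure (S : Set G) = ⊤)
    (hnb : ¬ ∃ f : G → Bool, ∀ x y : G, x * y⁻¹ ∈ S → f x ≠ f y) :
    spectrum ℝ (cayleyMatrix (S : Set G)) ⊆ Set.Ioc (-#S : ℝ) #S := by
  intro μ hμ
  rw [← spectrum_toLin', ← Module.End.hasEigenvalue_iff_mem_spectrum] at hμ
  obtain ⟨v, hv⟩ := hμ.exists_hasEigenvector
  have hAv : cayleyMatrix (S : Set G) *ᵥ v = μ • v := by
    simpa using Module.End.mem_eigenspace_iff.mp hv.1
  have habs := abs_le_card_of_cayleyMatrix_mulVec_eq_smul hv.2 hAv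
  refine ⟨(neg_le_of_abs_le habs).lt_of_ne fun h => hv.2 ?_, le_of_abs_le habs⟩
  exact eq_zero_of_cayleyMatrix_mulVec_eq_neg_card_smul hsym hgen hnb (h ▸ hAv)

theorem aeval_cayleyMatrix_mul_prod_Ioo_eq_zero [DecidableEq G] (hsym : ∀ s ∈ S, s⁻¹ ∈ S)
    (hgen : Subgroup.closure (S : Set G) = ⊤)
    (hint : isIntegralMatrix (cayleyMatrix (S : Set G)))
    (hnb : ¬ ∃ f : G → Bool, ∀ x y : G, x * y⁻¹ ∈ S → f x ≠ f y) :
    aeval (cayleyMatrix (S : Set G))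
      ((X - C (#S : ℤ)) * ∏ j ∈ Ioo (-(#S : ℤ)) #S, (X - C j)) = 0 := by
  rw [← aeval_map_algebraMap ℝ]
  refine (cayleyMatrix_isHermitian hsym).aeval_eq_zero_of_forall_mem_spectrum fun μ hμ => ?_
  obtain ⟨z, rfl⟩ := hint.exists_int_eq_of_mem_spectrum hμ
  obtain ⟨hlo, hhi⟩ := cayleyMatrix_spectrum_subset_Ioc hsym hgen hnb hμ
  simp only [Polynomial.map_mul, Polynomial.map_sub, Polynomial.map_prod, map_X, map_C, eval_mul,
    eval_sub, eval_prod, eval_X, eval_C, algebraMap_int_eq, Int.coe_castRingHom, Int.cast_natCast]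
  rcases hhi.eq_or_lt with h | h
  · rw [h, sub_self, zero_mul]
  · have hz : z ∈ Ioo (-(#S : ℤ)) #S := mem_Ioo.mpr ⟨by exact_mod_cast hlo, by exact_mod_cast h⟩
    exact mul_eq_zero_of_right _ (prod_eq_zero hz (sub_self _))

theorem cayleyMatrix_mul_aeval_prod_Ioo [DecidableEq G] (hsym : ∀ s ∈ S, s⁻¹ ∈ S)
    (hgen : Subgroup.closure (S : Set G) = ⊤)
    (hint : isIntegralMatrix (cayleyMatrix (S : Set G)))
    (hnb : ¬ ∃ f : G → Bool, ∀ x y : G, x * y⁻¹ ∈ S → f x ≠ f y) :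
    cayleyMatrix (S : Set G) *
        aeval (cayleyMatrix (S : Set G)) (∏ j ∈ Ioo (-(#S : ℤ)) #S, (X - C j)) =
      (#S : ℝ) • aeval (cayleyMatrix (S : Set G)) (∏ j ∈ Ioo (-(#S : ℤ)) #S, (X - C j)) := by
  have := aeval_cayleyMatrix_mul_prod_Ioo_eq_zero hsym hgen hint hnb
  rw [map_mul, map_sub, aeval_X, aeval_C, sub_mul, sub_eq_zero] at this
  simpa [Algebra.smul_def] using this

theorem apply_eq_of_cayleyMatrix_mul_eq_card_smul (hsym : ∀ s ∈ S, s⁻¹ ∈ S)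
    (hgen : Subgroup.closure (S : Set G) = ⊤) {M : Matrix G G ℝ} (hM : M.IsHermitian)
    (hAM : cayleyMatrix (S : Set G) * M = (#S : ℝ) • M) (x y : G) : M x y = M 1 1 := by
  have hcol (y : G) : cayleyMatrix (S : Set G) *ᵥ (fun x => M x y) = (#S : ℝ) • fun x => M x y :=
    funext fun x => congrFun (congrFun hAM x) y
  calc M x y = M 1 y := eq_of_cayleyMatrix_mulVec_eq_card_smul hsym hgen (hcol y) x 1
    _ = M y 1 := by simpa using hM.apply y 1
    _ = M 1 1 := eq_of_cayleyMatrix_mulVec_eq_card_smul hsym hgen (hcol 1) y 1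

end Cayley

theorem card_dvd_factorial_of_not_bipartite_general (G : Type*) [Group G] [Fintype G]
    (S : Finset G)
    (hsym : ∀ s ∈ S, s⁻¹ ∈ S)
    (hgen : Subgroup.closure (S : Set G) = ⊤)
    (hint : isIntegralMatrix (cayleyMatrix (S : Set G)))
    (hnb : ¬ ∃ f : G → Bool, ∀ x y : G, x * y⁻¹ ∈ S → f x ≠ f y) :
    Fintype.card G ∣ Nat.factorial (2 * S.card - 1) := by
  classical
  set p : ℤ[X] := ∏ j ∈ Ioo (-(#S : ℤ)) #S, (X - C j)
  have hM : (aeval (cayleyMatrix (S : Set G)) p).IsHermitian := by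
    have := (cayleyMatrix_isHermitian hsym).aeval (p.map (algebraMap ℤ ℝ))
    rwa [aeval_map_algebraMap] at this
  have hconst := apply_eq_of_cayleyMatrix_mul_eq_card_smul hsym hgen hM
    (cayleyMatrix_mul_aeval_prod_Ioo hsym hgen hint hnb)
  obtain ⟨c, hc⟩ := exists_intCast_eq_aeval_cayleyMatrix_apply (S := S) p 1 1
  have hrow : (Fintype.card G * c : ℝ) = (2 * #S - 1).factorial :=
    calc (Fintype.card G * c : ℝ) = ∑ y, aeval (cayleyMatrix (S : Set G)) p 1 y := by
          simp [hconst 1, hc]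
      _ = p.eval (#S : ℤ) := by exact_mod_cast sum_aeval_cayleyMatrix_apply p 1
      _ = (2 * #S - 1).factorial := by
          simp only [p, eval_prod, eval_sub, eval_X, eval_C, prod_Ioo_neg_sub_eq_factorial,
            Int.cast_natCast]
  exact Int.natCast_dvd_natCast.mp ⟨c, by exact_mod_cast hrow.symm⟩

theorem card_dvd_factorial_of_not_bipartite (G : Type*) [Group G] [Fintype G]
    (S : Finset G)
    (hsym : ∀ s ∈ S, s⁻¹ ∈ S) (h1 : (1 : G) ∉ S)
    (hgen : Subgroup.closure (S : Set G) = ⊤)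
    (hint : isIntegralMatrix (cayleyMatrix (S : Set G)))
    (hnb : ¬ ∃ f : G → Bool, ∀ x y : G, x * y⁻¹ ∈ S → f x ≠ f y) :
    Fintype.card G ∣ Nat.factorial (2 * S.card - 1) :=
  card_dvd_factorial_of_not_bipartite_general G S hsym hgen hint hnb
end

section
/- Let G be a finite group, H a subgroup, and S a symmetric subset of H not containing 1 that generates H, such that Cay(H,S) has all integer eigenvalues. Let T = S ∪ (G \ H). Then Cay(G,T) has all integer eigenvalues. -/
private lemma hasEigenvalue_of_mulVec' {n : Type*} (i1 : DecidableEq n) (i2 : Fintype n)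
    (i3 : Fintype n) (A : Matrix n n ℝ) (μ : ℝ) (u : n → ℝ) (hu : u ≠ 0)
    (h : @Matrix.mulVec n n ℝ _ i3 A u = μ • u) :
    Module.End.HasEigenvalue (@Matrix.toLin' ℝ _ n n i1 i2 A) μ := by
  cases Subsingleton.elim i3 i2
  refine Module.End.hasEigenvalue_of_hasEigenvector (x := u) ⟨?_, hu⟩
  rw [Module.End.mem_eigenspace_iff, Matrix.toLin'_apply, h]

private lemma exists_mulVec_eigvec' {n : Type*} (i1 : DecidableEq n) (i2 : Fintype n)
    (i3 : Fintype n) (A : Matrix n n ℝ) (μ : ℝ)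
    (h : Module.End.HasEigenvalue (@Matrix.toLin' ℝ _ n n i1 i2 A) μ) :
    ∃ v : n → ℝ, v ≠ 0 ∧ @Matrix.mulVec n n ℝ _ i3 A v = μ • v := by
  cases Subsingleton.elim i3 i2
  obtain ⟨v, hv⟩ := h.exists_hasEigenvector
  exact ⟨v, hv.2, by rw [← Matrix.toLin'_apply A v, hv.apply_eq_smul]⟩

theorem subgroup_cayley_integral_extension (G : Type*) [Group G] [Fintype G]
    (H : Subgroup G) (S : Set G)
    (hSH : S ⊆ (H : Set G))
    (hsym : ∀ s ∈ S, s⁻¹ ∈ S) (h1 : (1 : G) ∉ S)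
    (hgen : Subgroup.closure ((fun h : H => (h : G)) ⁻¹' S) = (⊤ : Subgroup H))
    (hint : isIntegralMatrix (cayleyMatrix ((fun h : H => (h : G)) ⁻¹' S))) :
    isIntegralMatrix (cayleyMatrix (S ∪ (H : Set G)ᶜ)) := by
  classical
  simp only [isIntegralMatrix] at hint ⊢
  intro μ hμ
  obtain ⟨v, hv0, heq⟩ := exists_mulVec_eigvec' _ _ (inferInstance) _ μ hμ
  set d : ℕ := (Finset.univ.filter (fun s : G => s ∈ S)).card with hd
  set m : ℕ := (Finset.univ.filter (fun x : G => x ∈ H)).card with hm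
  set N : ℕ := Fintype.card G with hN
  set T : ℝ := ∑ y : G, v y with hT
  set C : G → ℝ := fun x => ∑ y : G, if x * y⁻¹ ∈ H then v y else 0 with hC
  set A : G → ℝ := fun x => ∑ y : G, if x * y⁻¹ ∈ S then v y else 0 with hA
  -- counting lemmas
  have c1 : ∀ g : G, (∑ x : G, if x * g ∈ (H : Set G) then (1:ℝ) else 0) = m := by
    intro g
    have e1 : (∑ x : G, if x * g ∈ (H : Set G) then (1:ℝ) else 0)
        = ∑ x : G, if x ∈ (H : Set G) then (1:ℝ) else 0 :=
      Fintype.sum_bijective (· * g) (Group.mulRight_bijective g) _ _ (fun x => rfl)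
    have e2 : Finset.filter (fun x : G => x ∈ (H : Set G)) Finset.univ
        = Finset.filter (fun x : G => x ∈ H) Finset.univ :=
      Finset.filter_congr (fun x _ => by simp)
    rw [e1, Finset.sum_boole, e2, hm]
  have c2 : ∀ g : G, (∑ x : G, if x * g ∈ S then (1:ℝ) else 0) = d := by
    intro g
    have e1 : (∑ x : G, if x * g ∈ S then (1:ℝ) else 0)
        = ∑ x : G, if x ∈ S then (1:ℝ) else 0 :=
      Fintype.sum_bijective (· * g) (Group.mulRight_bijective g) _ _ (fun x => rfl)
    rw [e1, Finset.sum_boole, hd]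
  -- pointwise eigen equation
  have hmain : ∀ x : G, μ * v x = A x + (T - C x) := by
    intro x
    have h0 := congrFun heq x
    simp only [Matrix.mulVec, dotProduct, cayleyMatrix, Pi.smul_apply,
      smul_eq_mul] at h0
    rw [← h0, hA, hT, hC]
    simp only
    rw [← Finset.sum_sub_distrib, ← Finset.sum_add_distrib]
    refine Finset.sum_congr rfl (fun y _ => ?_)
    by_cases hS : x * y⁻¹ ∈ S
    · have hH : x * y⁻¹ ∈ H := hSH hS
      simp [hS, hH, Set.mem_union]
    · by_cases hH : x * y⁻¹ ∈ H
      · simp [hS, hH, Set.mem_union]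
      · simp [hS, hH, Set.mem_union]
  -- coset-restricted sums
  have hsumv : ∀ x₀ : G, (∑ x : G, if x * x₀⁻¹ ∈ (H : Set G) then v x else 0) = C x₀ := by
    intro x₀
    rw [hC]
    refine Finset.sum_congr rfl (fun y _ => ?_)
    have : y * x₀⁻¹ ∈ (H : Set G) ↔ x₀ * y⁻¹ ∈ H := by
      constructor
      · intro h; simpa using H.inv_mem h
      · intro h; simpa using H.inv_mem h
    simp [this]
  have hCconst : ∀ x₀ x : G, x * x₀⁻¹ ∈ H → C x = C x₀ := by
    intro x₀ x hx
    rw [hC]; simp only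
    refine Finset.sum_congr rfl (fun y _ => ?_)
    have key : x * y⁻¹ ∈ H ↔ x₀ * y⁻¹ ∈ H := by
      constructor
      · intro h
        have := H.mul_mem (H.inv_mem hx) h
        simpa [mul_assoc] using this
      · intro h
        have := H.mul_mem hx h
        simpa [mul_assoc] using this
    simp [key]
  have hsumC : ∀ x₀ : G, (∑ x : G, if x * x₀⁻¹ ∈ (H : Set G) then C x else 0)
      = (m : ℝ) * C x₀ := by
    intro x₀
    have : ∀ x : G, (if x * x₀⁻¹ ∈ (H : Set G) then C x else 0)
        = (if x * x₀⁻¹ ∈ (H : Set G) then (1:ℝ) else 0) * C x₀ := by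
      intro x
      by_cases h : x * x₀⁻¹ ∈ (H : Set G)
      · simp [h, hCconst x₀ x h]
      · simp [h]
    rw [Finset.sum_congr rfl (fun x _ => this x), ← Finset.sum_mul, c1]
  have hsumT : ∀ x₀ : G, (∑ x : G, if x * x₀⁻¹ ∈ (H : Set G) then T else 0)
      = (m : ℝ) * T := by
    intro x₀
    have : ∀ x : G, (if x * x₀⁻¹ ∈ (H : Set G) then T else 0)
        = (if x * x₀⁻¹ ∈ (H : Set G) then (1:ℝ) else 0) * T := by
      intro x; by_cases h : x * x₀⁻¹ ∈ (H:Set G) <;> simp [h]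
    rw [Finset.sum_congr rfl (fun x _ => this x), ← Finset.sum_mul, c1]
  have hsumA : ∀ x₀ : G, (∑ x : G, if x * x₀⁻¹ ∈ (H : Set G) then A x else 0)
      = (d : ℝ) * C x₀ := by
    intro x₀
    rw [hA]
    simp only
    have step1 : ∀ x : G, (if x * x₀⁻¹ ∈ (H : Set G) then (∑ y : G, if x * y⁻¹ ∈ S then v y else 0) else 0)
        = ∑ y : G, if x * x₀⁻¹ ∈ (H : Set G) ∧ x * y⁻¹ ∈ S then v y else 0 := by
      intro x
      by_cases h : x * x₀⁻¹ ∈ (H : Set G)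
      · simp [h]
      · simp [h]
    rw [Finset.sum_congr rfl (fun x _ => step1 x), Finset.sum_comm]
    have inner : ∀ y : G, (∑ x : G, if x * x₀⁻¹ ∈ (H : Set G) ∧ x * y⁻¹ ∈ S then v y else 0)
        = (if x₀ * y⁻¹ ∈ H then (d : ℝ) else 0) * v y := by
      intro y
      have cond : ∀ x : G, (x * x₀⁻¹ ∈ (H : Set G) ∧ x * y⁻¹ ∈ S) ↔ (x₀ * y⁻¹ ∈ H ∧ x * y⁻¹ ∈ S) := by
        intro x
        constructor
        · rintro ⟨hx, hs⟩
          refine ⟨?_, hs⟩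
          have hxy : x * y⁻¹ ∈ H := hSH hs
          have := H.mul_mem (H.inv_mem hx) hxy
          simpa [mul_assoc] using this
        · rintro ⟨hx0, hs⟩
          refine ⟨?_, hs⟩
          have hxy : x * y⁻¹ ∈ H := hSH hs
          have := H.mul_mem hxy (H.inv_mem hx0)
          show x * x₀⁻¹ ∈ H
          have e : x * y⁻¹ * (x₀ * y⁻¹)⁻¹ = x * x₀⁻¹ * (x₀ * y⁻¹ * (x₀ * y⁻¹)⁻¹) := by group
          have e2 : x * y⁻¹ * (x₀ * y⁻¹)⁻¹ = x * x₀⁻¹ := by group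
          rwa [e2] at this
      simp only [cond]
      by_cases h : x₀ * y⁻¹ ∈ H
      · simp only [h, true_and, if_pos]
        rw [← c2 y⁻¹]
        rw [Finset.sum_mul]
        refine Finset.sum_congr rfl (fun x _ => by by_cases hs : x * y⁻¹ ∈ S <;> simp [hs])
      · simp [h]
    rw [Finset.sum_congr rfl (fun y _ => inner y), hC]
    simp only
    rw [Finset.mul_sum]
    refine Finset.sum_congr rfl (fun y _ => by by_cases h : x₀ * y⁻¹ ∈ H <;> simp [h])
  -- global sums
  have hAsum : (∑ x : G, A x) = (d : ℝ) * T := by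
    rw [hA]; simp only
    rw [Finset.sum_comm]
    rw [hT, Finset.mul_sum]
    refine Finset.sum_congr rfl (fun y _ => ?_)
    rw [← c2 y⁻¹, Finset.sum_mul]
    refine Finset.sum_congr rfl (fun x _ => by by_cases hs : x * y⁻¹ ∈ S <;> simp [hs])
  have hCsum : (∑ x : G, C x) = (m : ℝ) * T := by
    rw [hC]; simp only
    rw [Finset.sum_comm]
    rw [hT, Finset.mul_sum]
    refine Finset.sum_congr rfl (fun y _ => ?_)
    rw [← c1 y⁻¹, Finset.sum_mul]
    refine Finset.sum_congr rfl (fun x _ => by by_cases hs : x * y⁻¹ ∈ H <;> simp [hs])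
  -- equation E2 (global)
  have E2 : μ * T = (d : ℝ) * T + ((N : ℝ) * T - (m : ℝ) * T) := by
    have := Finset.sum_congr rfl (fun x (_ : x ∈ Finset.univ) => hmain x)
    rw [← Finset.mul_sum, ← hT] at this
    rw [this, Finset.sum_add_distrib, Finset.sum_sub_distrib, hAsum, hCsum]
    simp [hN, Finset.sum_const, nsmul_eq_mul, Finset.card_univ]
  -- equation E1 (per coset)
  have E1 : ∀ x₀ : G, μ * C x₀ = (d : ℝ) * C x₀ + ((m : ℝ) * T - (m : ℝ) * C x₀) := by
    intro x₀
    have h1 : (∑ x : G, if x * x₀⁻¹ ∈ (H : Set G) then μ * v x else 0)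
        = ∑ x : G, if x * x₀⁻¹ ∈ (H : Set G) then A x + (T - C x) else 0 :=
      Finset.sum_congr rfl (fun x _ => by rw [hmain x])
    have lhs : (∑ x : G, if x * x₀⁻¹ ∈ (H : Set G) then μ * v x else 0) = μ * C x₀ := by
      rw [← hsumv x₀, Finset.mul_sum]
      exact Finset.sum_congr rfl (fun x _ => by by_cases h : x * x₀⁻¹ ∈ (H:Set G) <;> simp [h])
    have rhs : (∑ x : G, if x * x₀⁻¹ ∈ (H : Set G) then A x + (T - C x) else 0)
        = (d : ℝ) * C x₀ + ((m : ℝ) * T - (m : ℝ) * C x₀) := by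
      have split : ∀ x : G, (if x * x₀⁻¹ ∈ (H : Set G) then A x + (T - C x) else 0)
          = (if x * x₀⁻¹ ∈ (H : Set G) then A x else 0)
            + ((if x * x₀⁻¹ ∈ (H : Set G) then T else 0)
              - (if x * x₀⁻¹ ∈ (H : Set G) then C x else 0)) := by
        intro x; by_cases h : x * x₀⁻¹ ∈ (H:Set G) <;> simp [h]
      rw [Finset.sum_congr rfl (fun x _ => split x), Finset.sum_add_distrib,
        Finset.sum_sub_distrib, hsumA, hsumT, hsumC]
    rw [← lhs, h1, rhs]
  by_cases hCz : ∀ x : G, C x = 0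
  · -- all coset sums vanish: eigenvector lives inside a coset, reduce to H
    have hmpos : 0 < m := by
      rw [hm]
      exact Finset.card_pos.mpr ⟨1, Finset.mem_filter.mpr ⟨Finset.mem_univ 1, H.one_mem⟩⟩
    have hT0 : T = 0 := by
      have h2 : (m : ℝ) * T = 0 := by
        rw [← hCsum]
        exact Finset.sum_eq_zero (fun x _ => hCz x)
      have hm0 : (m : ℝ) ≠ 0 := Nat.cast_ne_zero.mpr hmpos.ne'
      exact (mul_eq_zero.mp h2).resolve_left hm0
    have hA' : ∀ x : G, μ * v x = A x := by
      intro x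
      have := hmain x
      rw [hCz x, hT0] at this
      simpa using this
    obtain ⟨x₀, hx₀⟩ : ∃ x : G, v x ≠ 0 := by
      by_contra hcon; push_neg at hcon; exact hv0 (funext hcon)
    set u : H → ℝ := fun h => v (↑h * x₀) with hu_def
    have hu : u ≠ 0 := by
      intro hcon
      exact hx₀ (by simpa [hu_def] using congrFun hcon 1)
    have key : ∀ h : H, (∑ y : G, if (↑h * x₀) * y⁻¹ ∈ S then v y else 0)
        = ∑ h' : H, (if ((h * h'⁻¹ : H) : G) ∈ S then v (↑h' * x₀) else 0) := by
      intro h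
      have hinj : ∀ a ∈ Finset.univ, ∀ b ∈ Finset.univ,
          (fun h' : H => ((h' : G) * x₀)) a = (fun h' : H => ((h' : G) * x₀)) b → a = b := by
        intro a _ b _ hab
        exact Subtype.ext (mul_right_cancel hab)
      have h0 : ∀ y ∈ Finset.univ, y ∉ Finset.univ.image (fun h' : H => ((h' : G) * x₀)) →
          (if (↑h * x₀) * y⁻¹ ∈ S then v y else 0) = 0 := by
        intro y _ hy
        by_contra hne
        have hcond : (↑h * x₀) * y⁻¹ ∈ S := by
          by_contra hc; rw [if_neg hc] at hne; exact hne rfl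
        have hmem : (↑h * x₀) * y⁻¹ ∈ H := hSH hcond
        have h2 : x₀ * y⁻¹ ∈ H := by
          have := H.mul_mem (H.inv_mem h.2) hmem
          simpa [mul_assoc] using this
        have h3 : y * x₀⁻¹ ∈ H := by simpa using H.inv_mem h2
        exact hy (Finset.mem_image.mpr ⟨⟨y * x₀⁻¹, h3⟩, Finset.mem_univ _, by simp⟩)
      rw [← Finset.sum_subset (Finset.subset_univ _) h0, Finset.sum_image hinj]
      refine Finset.sum_congr rfl (fun h' _ => ?_)
      have e : (↑h * x₀) * ((h' : G) * x₀)⁻¹ = ((h * h'⁻¹ : H) : G) := by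
        push_cast; group
      rw [e]
    have hmv : (cayleyMatrix ((fun h : H => (h : G)) ⁻¹' S)).mulVec u = μ • u := by
      funext h
      simp only [Matrix.mulVec, dotProduct, cayleyMatrix, Set.mem_preimage,
        Pi.smul_apply, smul_eq_mul]
      have h2 := hA' (↑h * x₀)
      rw [hA] at h2
      simp only at h2
      rw [key h] at h2
      calc (∑ h' : H, (if ((h * h'⁻¹ : H) : G) ∈ S then (1:ℝ) else 0) * u h')
          = ∑ h' : H, (if ((h * h'⁻¹ : H) : G) ∈ S then v (↑h' * x₀) else 0) := by
            refine Finset.sum_congr rfl (fun h' _ => ?_)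
            by_cases hs : ((h * h'⁻¹ : H) : G) ∈ S <;> simp [hs, hu_def]
        _ = μ * u h := by rw [← h2]
    exact hint μ (hasEigenvalue_of_mulVec' _ _ inferInstance _ μ u hu hmv)
  · push_neg at hCz
    obtain ⟨x₀, hx₀⟩ := hCz
    by_cases hT0 : T = 0
    · refine ⟨(d : ℤ) - (m : ℤ), ?_⟩
      have h2 : μ * C x₀ = ((d : ℝ) - (m : ℝ)) * C x₀ := by
        have := E1 x₀
        rw [hT0] at this
        rw [this]; ring
      have := mul_right_cancel₀ hx₀ h2
      push_cast
      exact this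
    · refine ⟨(d : ℤ) + (N : ℤ) - (m : ℤ), ?_⟩
      have h2 : μ * T = ((d : ℝ) + (N : ℝ) - (m : ℝ)) * T := by
        rw [E2]; ring
      have := mul_right_cancel₀ hT0 h2
      push_cast
      exact this
end

section
/- A finite group G has the property that every Cayley graph Cay(G,S) over a symmetric subset S (1 ∉ S) has integer eigenvalues if and only if every connected Cayley graph of G (i.e., with S generating G) has integer eigenvalues. -/
/-!
If `S` does not generate `G`, then `T = G \ (S ∪ {1})` contains the complement of the proper
subgroup `⟨S⟩`, and the complement of a proper subgroup generates the group, so `Cay(G,T)` is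
connected. Its adjacency matrix is `J - I - A`, where `A` is that of `Cay(G,S)`. Since `A` has
constant column sums `|S|`, every eigenvector of `A` for an eigenvalue `μ ≠ |S|` is orthogonal to
the all-ones vector, hence is an eigenvector of `J - I - A` for `-1 - μ`; so integrality of
`Cay(G,T)` forces integrality of `Cay(G,S)`.
-/

section Matrix

open Matrix

variable {n : Type*} [Fintype n]

theorem sum_eq_zero_of_mulVec_eq_smul {A : Matrix n n ℝ} {k μ : ℝ} {v : n → ℝ}
    (hcol : ∀ j, ∑ i, A i j = k) (hv : A *ᵥ v = μ • v) (hμ : μ ≠ k) : ∑ i, v i = 0 := by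
  have : μ * ∑ i, v i = k * ∑ i, v i := by
    calc μ * ∑ i, v i = ∑ i, (A *ᵥ v) i := by simp [hv, Finset.mul_sum]
      _ = ∑ j, (∑ i, A i j) * v j := by
        simp only [mulVec, dotProduct, Finset.sum_mul]; exact Finset.sum_comm
      _ = k * ∑ i, v i := by simp [hcol, Finset.mul_sum]
  exact (mul_eq_mul_right_iff.1 this).resolve_left hμ

variable [DecidableEq n]

theorem isIntegralMatrix_iff (A : Matrix n n ℝ) :
    isIntegralMatrix A ↔ ∀ μ : ℝ, ∀ v ≠ 0, A *ᵥ v = μ • v → ∃ z : ℤ, μ = z := by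
  rw [isIntegralMatrix, Subsingleton.elim (Fintype.ofFinite n) ‹_›,
    Subsingleton.elim (Classical.decEq n) ‹_›]
  refine forall_congr' fun μ => ⟨fun h v hv0 hv => h ?_, fun h hμ => ?_⟩
  · exact Module.End.hasEigenvalue_of_hasEigenvector
      ⟨Module.End.mem_eigenspace_iff.2 (by rw [toLin'_apply, hv]), hv0⟩
  · obtain ⟨v, hv, hv0⟩ := hμ.exists_hasEigenvector
    exact h v hv0 (by rw [← toLin'_apply, Module.End.mem_eigenspace_iff.1 hv])

theorem compl_mulVec_eq_smul {A : Matrix n n ℝ} {μ : ℝ} {v : n → ℝ}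
    (hv : A *ᵥ v = μ • v) (hsum : ∑ i, v i = 0) :
    (of (fun _ _ => 1) - 1 - A) *ᵥ v = (-(1 + μ)) • v := by
  ext i
  have hJ : (of fun _ _ => 1 : Matrix n n ℝ) *ᵥ v = 0 := by
    ext; simp [mulVec, dotProduct, hsum]
  simp only [sub_mulVec, hJ, one_mulVec, zero_sub, hv, Pi.sub_apply, Pi.neg_apply, Pi.smul_apply,
    smul_eq_mul]
  ring

theorem isIntegralMatrix_of_isIntegralMatrix_compl {A : Matrix n n ℝ} {k : ℤ}
    (hcol : ∀ j, ∑ i, A i j = k) (h : isIntegralMatrix (of (fun _ _ => 1) - 1 - A)) :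
    isIntegralMatrix A := by
  rw [isIntegralMatrix_iff] at h ⊢
  intro μ v hv0 hv
  by_cases hμ : μ = k
  · exact ⟨k, hμ⟩
  obtain ⟨z, hz⟩ := h _ v hv0 (compl_mulVec_eq_smul hv (sum_eq_zero_of_mulVec_eq_smul hcol hv hμ))
  exact ⟨-z - 1, by push_cast; linarith⟩

end Matrix

section Group

variable {G : Type*} [Group G]

theorem Subgroup.closure_compl_eq_top {H : Subgroup G} (hH : H ≠ ⊤) :
    Subgroup.closure (H : Set G)ᶜ = ⊤ := by
  obtain ⟨g, hg⟩ : ∃ g, g ∉ H := by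
    by_contra! h; exact hH (eq_top_iff' H |>.2 h)
  refine eq_top_iff' _ |>.2 fun x => ?_
  by_cases hx : x ∈ H
  · have hxg : x * g ∉ H := fun h => hg (by simpa using H.mul_mem (H.inv_mem hx) h)
    simpa using mul_mem (subset_closure (show x * g ∈ (H : Set G)ᶜ from hxg))
      (inv_mem (subset_closure (show g ∈ (H : Set G)ᶜ from hg)))
  · exact subset_closure hx

theorem closure_compl_union_one_eq_top {S : Set G} (hS : Subgroup.closure S ≠ ⊤) :
    Subgroup.closure (S ∪ {1})ᶜ = ⊤ := by
  refine eq_top_mono (Subgroup.closure_mono (Set.compl_subset_compl.2 ?_))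
    (Subgroup.closure_compl_eq_top hS)
  exact Set.union_subset Subgroup.subset_closure (Set.singleton_subset_iff.2 (one_mem _))

theorem inv_mem_compl_union_one {S : Set G} (hS : ∀ s ∈ S, s⁻¹ ∈ S) :
    ∀ s ∈ (S ∪ {1})ᶜ, s⁻¹ ∈ (S ∪ {1})ᶜ := by
  intro s hs
  simp only [Set.mem_compl_iff, Set.mem_union, Set.mem_singleton_iff, inv_eq_one] at hs ⊢
  exact fun h => hs (h.imp (by simpa using hS _ ·) id)

theorem cayleyMatrix_compl_union_one [DecidableEq G] {S : Set G} (h1 : (1 : G) ∉ S) :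
    cayleyMatrix (S ∪ {1})ᶜ = Matrix.of (fun _ _ => 1) - 1 - cayleyMatrix S := by
  ext x y
  by_cases hxy : x = y
  · simp [cayleyMatrix, hxy, h1]
  · have : x * y⁻¹ ≠ 1 := by rwa [Ne, mul_inv_eq_one]
    by_cases hS : x * y⁻¹ ∈ S <;> simp [cayleyMatrix, hxy, hS, this]

variable [Fintype G]

theorem sum_cayleyMatrix_apply (S : Set G) (y : G) : ∑ x, cayleyMatrix S x y = Nat.card S := by
  classical
  rw [Fintype.sum_equiv (Equiv.mulRight y⁻¹) _ (fun z => if z ∈ S then (1 : ℝ) else 0)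
    (fun x => by simp only [cayleyMatrix, Equiv.coe_mulRight]; congr)]
  simp [Finset.sum_boole, Nat.card_eq_fintype_card, Fintype.card_subtype]

end Group

theorem cayley_integral_iff_connected_cayley_integral (G : Type*) [Group G] [Fintype G] :
    (∀ S : Set G, (∀ s ∈ S, s⁻¹ ∈ S) → (1 : G) ∉ S →
        isIntegralMatrix (cayleyMatrix S)) ↔
      (∀ S : Set G, (∀ s ∈ S, s⁻¹ ∈ S) → (1 : G) ∉ S → Subgroup.closure S = ⊤ →
        isIntegralMatrix (cayleyMatrix S)) := by
  classical
  refine ⟨fun h S hS h1 _ => h S hS h1, fun h S hS h1 => ?_⟩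
  by_cases hgen : Subgroup.closure S = ⊤
  · exact h S hS h1 hgen
  have hcompl := h _ (inv_mem_compl_union_one hS) (by simp) (closure_compl_union_one_eq_top hgen)
  rw [cayleyMatrix_compl_union_one h1] at hcompl
  exact isIntegralMatrix_of_isIntegralMatrix_compl (k := Nat.card S)
    (by simpa using sum_cayleyMatrix_apply S) hcompl
end

section
/- In the symmetric group S3, for every symmetric subset S ⊆ S3, all eigenvalues of the Cayley graph Cay(S3, S) are integers. -/
open Polynomial in
lemma annihil {n : Type*} [Fintype n] [DecidableEq n] (B : Matrix n n ℤ) (L : List ℤ)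
    (h : (L.map (fun c : ℤ => B - (c : Matrix n n ℤ))).prod = 0) :
    isIntegralMatrix (B.map (Int.cast : ℤ → ℝ)) := by
  unfold isIntegralMatrix
  rw [Subsingleton.elim (Fintype.ofFinite n) ‹Fintype n›,
      Subsingleton.elim (Classical.decEq n) ‹DecidableEq n›]
  intro μ hμ
  set A : Matrix n n ℝ := B.map (Int.cast : ℤ → ℝ) with hA
  obtain ⟨v, hv⟩ := hμ.exists_hasEigenvector
  set q : ℝ[X] := (L.map (fun c : ℤ => X - (c : ℝ[X]))).prod with hqdef
  have hq0 : Polynomial.aeval A q = 0 := by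
    have e1 : Polynomial.aeval A q = (L.map (fun c : ℤ => A - (c : Matrix n n ℝ))).prod := by
      rw [hqdef, map_list_prod, List.map_map]
      have hf : (⇑(Polynomial.aeval A) ∘ fun c : ℤ => X - (c : ℝ[X]))
          = fun c : ℤ => A - (c : Matrix n n ℝ) := by
        funext c
        simp [Function.comp, map_sub, map_intCast]
      rw [hf]
    have e2 : (L.map (fun c : ℤ => A - (c : Matrix n n ℝ))).prod
        = ((Int.castRingHom ℝ).mapMatrix : Matrix n n ℤ →+* Matrix n n ℝ)
            ((L.map (fun c : ℤ => B - (c : Matrix n n ℤ))).prod) := by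
      rw [map_list_prod, List.map_map]
      have hf : (⇑((Int.castRingHom ℝ).mapMatrix : Matrix n n ℤ →+* Matrix n n ℝ)
            ∘ fun c : ℤ => B - (c : Matrix n n ℤ))
          = fun c : ℤ => A - (c : Matrix n n ℝ) := by
        funext c
        simp [Function.comp, map_sub, map_intCast, hA]
      rw [hf]
    rw [e1, e2, h, map_zero]
  have hend : Polynomial.aeval (Matrix.toLin' A) q = 0 := by
    have h' : Matrix.toLin' A = Matrix.toLinAlgEquiv' A :=
      LinearMap.ext fun w => (Matrix.toLin'_apply A w).trans
        (Matrix.toLinAlgEquiv'_apply A w).symm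
    rw [h', Polynomial.aeval_algHom_apply, hq0, map_zero]
  have hev := Module.End.aeval_apply_of_hasEigenvector (p := q) hv
  rw [hend] at hev
  have hz : Polynomial.eval μ q = 0 := by
    rcases smul_eq_zero.mp hev.symm with h' | h'
    · exact h'
    · exact absurd h' hv.right
  have hprod : (L.map (fun c : ℤ => μ - (c : ℝ))).prod = 0 := by
    rw [← hz, hqdef, ← Polynomial.coe_evalRingHom, map_list_prod, List.map_map]
    have hf : (⇑(Polynomial.evalRingHom μ) ∘ fun c : ℤ => X - (c : ℝ[X]))
        = fun c : ℤ => μ - (c : ℝ) := by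
      funext c
      simp [Function.comp]
    rw [hf]
  have h0 : (0 : ℝ) ∈ L.map (fun c : ℤ => μ - (c : ℝ)) := List.prod_eq_zero_iff.mp hprod
  obtain ⟨c, _, hc⟩ := List.mem_map.mp h0
  exact ⟨c, by linarith⟩

abbrev G3 := Equiv.Perm (Fin 3)
def tt1 : G3 := Equiv.swap 0 1
def tt2 : G3 := Equiv.swap 0 2
def tt3 : G3 := Equiv.swap 1 2
def rr : G3 := Equiv.swap 0 1 * Equiv.swap 1 2
def rr2 : G3 := rr * rr

def Pb (b1 b2 b3 b4 : Bool) (g : G3) : Bool :=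
  (b1 && decide (g = tt1)) || (b2 && decide (g = tt2)) || (b3 && decide (g = tt3)) ||
    (b4 && (decide (g = rr) || decide (g = rr2)))

def MP (P : G3 → Bool) : Matrix G3 G3 ℤ :=
  Matrix.of fun x y => if P (x * y⁻¹) then 1 else 0

def Lc : List ℤ := [-3, -2, -1, 0, 1, 2, 3, 4, 5]

lemma enum3 : ∀ g : G3, g = 1 ∨ g = tt1 ∨ g = tt2 ∨ g = tt3 ∨ g = rr ∨ g = rr2 := by decide

lemma Pb_one (b1 b2 b3 b4 : Bool) : Pb b1 b2 b3 b4 1 = false := by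
  revert b1 b2 b3 b4; decide
lemma Pb_tt1 (b1 b2 b3 b4 : Bool) : Pb b1 b2 b3 b4 tt1 = b1 := by
  revert b1 b2 b3 b4; decide
lemma Pb_tt2 (b1 b2 b3 b4 : Bool) : Pb b1 b2 b3 b4 tt2 = b2 := by
  revert b1 b2 b3 b4; decide
lemma Pb_tt3 (b1 b2 b3 b4 : Bool) : Pb b1 b2 b3 b4 tt3 = b3 := by
  revert b1 b2 b3 b4; decide
lemma Pb_rr (b1 b2 b3 b4 : Bool) : Pb b1 b2 b3 b4 rr = b4 := by
  revert b1 b2 b3 b4; decide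
lemma Pb_rr2 (b1 b2 b3 b4 : Bool) : Pb b1 b2 b3 b4 rr2 = b4 := by
  revert b1 b2 b3 b4; decide

set_option maxRecDepth 100000 in
set_option maxHeartbeats 4000000 in
lemma key_annihilates : ∀ b1 b2 b3 b4 : Bool,
    (Lc.map (fun c : ℤ => MP (Pb b1 b2 b3 b4) - (c : Matrix G3 G3 ℤ))).prod = 0 := by decide

lemma case_lemma (P : G3 → Bool) (L : List ℤ)
    (hP : (L.map (fun c : ℤ => MP P - (c : Matrix G3 G3 ℤ))).prod = 0)
    (S : Set G3) (hmem : ∀ g : G3, g ∈ S ↔ P g = true) :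
    isIntegralMatrix (cayleyMatrix S) := by
  have hC : cayleyMatrix S = (MP P).map (Int.cast : ℤ → ℝ) := by
    funext x y
    simp only [cayleyMatrix, Matrix.map_apply, MP, Matrix.of_apply, hmem (x * y⁻¹)]
    by_cases h : P (x * y⁻¹) = true <;> simp [h]
  rw [hC]
  exact annihil _ L hP

theorem perm_three_cayley_integral :
    ∀ S : Set (Equiv.Perm (Fin 3)), (∀ s ∈ S, s⁻¹ ∈ S) → (1 : Equiv.Perm (Fin 3)) ∉ S →
      isIntegralMatrix (cayleyMatrix S) := by
  intro S hsym h1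
  have hr2r : rr2 ∈ S ↔ rr ∈ S := by
    constructor
    · intro h
      have := hsym _ h
      rwa [show rr2⁻¹ = rr from by decide] at this
    · intro h
      have := hsym _ h
      rwa [show rr⁻¹ = rr2 from by decide] at this
  have hbool : ∀ p : Prop, ∃ b : Bool, p ↔ b = true := fun p => by
    by_cases h : p
    · exact ⟨true, by simp [h]⟩
    · exact ⟨false, by simp [h]⟩
  obtain ⟨b1, hb1⟩ := hbool (tt1 ∈ S)
  obtain ⟨b2, hb2⟩ := hbool (tt2 ∈ S)
  obtain ⟨b3, hb3⟩ := hbool (tt3 ∈ S)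
  obtain ⟨b4, hb4⟩ := hbool (rr ∈ S)
  apply case_lemma (Pb b1 b2 b3 b4) Lc (key_annihilates b1 b2 b3 b4) S
  intro g
  rcases enum3 g with rfl | rfl | rfl | rfl | rfl | rfl
  · rw [Pb_one]; simp [h1]
  · rw [Pb_tt1]; exact hb1
  · rw [Pb_tt2]; exact hb2
  · rw [Pb_tt3]; exact hb3
  · rw [Pb_rr]; exact hb4
  · rw [Pb_rr2]; exact hr2r.trans hb4
end

section
/- For the group G = Q8 × (Z/2)^d and every symmetric subset S of G not containing the identity, the Cayley graph Cay(G,S) has all eigenvalues integral. -/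
/-!
The Cayley operator `∑ s ∈ S, λ s` of the left regular representation `λ` commutes with `λ z` for
the central involution `z`, so an eigenvector may be taken in the `+1` or the `-1` eigenspace of
`λ z`; both are subrepresentations. On the `+1` eigenspace every square `g * g ∈ {1, z}` acts
trivially, so the `λ s` are commuting involutions. On the `-1` eigenspace an element with
`s * s = z` has `λ s⁻¹ = -λ s` and cancels against `s⁻¹ ∈ S`; what remains are the involutions of
`S`, which are central, hence again commuting involutions. Finally, a sum of commuting involutions
has integer eigenvalues: an eigenvector can be moved into a `±1` eigenspace of one summand, where
the remaining sum has eigenvalue `μ ∓ 1`.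
-/

namespace Module.End

variable {K V : Type*} [Field K] [AddCommGroup V] [Module K V]

theorem exists_apply_eq_smul_of_commute_involution {A r : End K V} (hr : r * r = 1)
    (hAr : Commute A r) {μ : K} {v : V} (hv : v ≠ 0) (hAv : A v = μ • v) :
    ∃ w ≠ 0, A w = μ • w ∧ (r w = w ∨ r w = -w) := by
  by_cases hneg : r v = -v
  · exact ⟨v, hv, hAv, Or.inr hneg⟩
  have hrr : r (r v) = v := congr($hr v)
  refine ⟨v + r v, fun h => hneg (eq_neg_of_add_eq_zero_right h), ?_, Or.inl ?_⟩
  · rw [map_add, ← mul_apply, hAr.eq, mul_apply, hAv, map_smul, smul_add]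
  · rw [map_add, hrr, add_comm]

theorem exists_int_eq_of_sum_involution_apply_eq_smul {ι : Type*} (T : Finset ι)
    (p : ι → End K V) (hsq : ∀ i ∈ T, p i * p i = 1) (hcomm : ∀ i ∈ T, ∀ j ∈ T, Commute (p i) (p j))
    {μ : K} {v : V} (hv : v ≠ 0) (hμ : (∑ i ∈ T, p i) v = μ • v) : ∃ k : ℤ, μ = k := by
  classical
  induction T using Finset.induction_on generalizing μ v with
  | empty => exact ⟨0, by simpa [hv, eq_comm] using hμ⟩
  | insert i T hi ih =>
    have hT : ∀ j ∈ T, j ∈ insert i T := fun j hj => Finset.mem_insert_of_mem hj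
    have hsqT : ∀ j ∈ T, p j * p j = 1 := fun j hj => hsq j (hT j hj)
    have hcommT : ∀ j ∈ T, ∀ l ∈ T, Commute (p j) (p l) := fun j hj l hl =>
      hcomm j (hT j hj) l (hT l hl)
    rw [Finset.sum_insert hi] at hμ
    have hcomm' : Commute (p i + ∑ j ∈ T, p j) (p i) :=
      (Commute.refl _).add_left <| Commute.sum_left _ _ _ fun j hj =>
        hcomm j (hT j hj) i (Finset.mem_insert_self i T)
    obtain ⟨w, hw, hμw, hpw⟩ := exists_apply_eq_smul_of_commute_involution
      (hsq i (Finset.mem_insert_self i T)) hcomm' hv hμ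
    have hrest : (∑ j ∈ T, p j) w = μ • w - p i w := by
      rw [← hμw, LinearMap.add_apply, add_sub_cancel_left]
    rcases hpw with hpw | hpw
    · obtain ⟨k, hk⟩ := ih hsqT hcommT (μ := μ - 1) hw (by rw [hrest, hpw, sub_smul, one_smul])
      exact ⟨k + 1, by push_cast; linear_combination hk⟩
    · obtain ⟨k, hk⟩ := ih hsqT hcommT (μ := μ + 1) hw
        (by rw [hrest, hpw, add_smul, one_smul, sub_neg_eq_add])
      exact ⟨k - 1, by push_cast; linear_combination hk⟩

end Module.End

theorem commute_of_mul_self_eq_one {M : Type*} [Monoid M] {a b : M} (ha : a * a = 1)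
    (hb : b * b = 1) (hab : a * b * (a * b) = 1) : Commute a b :=
  calc a * b = a * (a * b * (a * b)) * b := by rw [hab, mul_one]
    _ = (a * a) * (b * a) * (b * b) := by simp only [mul_assoc]
    _ = b * a := by rw [ha, hb, one_mul, mul_one]

namespace Representation

variable {K G V : Type*} [Field K] [Group G] [AddCommGroup V] [Module K V]
  (ρ : Representation K G V) {z : G}

theorem eigenspace_center_le_comap (hz : z ∈ Subgroup.center G) (ε : K) (g : G) :
    Module.End.eigenspace (ρ z) ε ≤ (Module.End.eigenspace (ρ z) ε).comap (ρ g) := by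
  intro x hx
  rw [Submodule.mem_comap, Module.End.mem_eigenspace_iff] at *
  rw [← Module.End.mul_apply, ← map_mul, ← Subgroup.mem_center_iff.1 hz g, map_mul,
    Module.End.mul_apply, hx, map_smul]

noncomputable def restrictEigenspace (hz : z ∈ Subgroup.center G) (ε : K) :
    Representation K G (Module.End.eigenspace (ρ z) ε) :=
  ρ.subrepresentation _ (ρ.eigenspace_center_le_comap hz ε)

theorem restrictEigenspace_apply_center (hz : z ∈ Subgroup.center G) (ε : K) :
    ρ.restrictEigenspace hz ε z = ε • 1 := by
  ext ⟨x, hx⟩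
  simpa [restrictEigenspace] using Module.End.mem_eigenspace_iff.1 hx

theorem exists_restrictEigenspace_sum_apply_eq_smul (hz : z ∈ Subgroup.center G) {ε μ : K}
    {w : V} (hw : w ≠ 0) (hzw : ρ z w = ε • w) (T : Finset G) (hμ : (∑ s ∈ T, ρ s) w = μ • w) :
    ∃ x ≠ 0, (∑ s ∈ T, ρ.restrictEigenspace hz ε s) x = μ • x := by
  refine ⟨⟨w, Module.End.mem_eigenspace_iff.2 hzw⟩, by simpa using hw, Subtype.ext ?_⟩
  simpa [restrictEigenspace] using hμ

theorem exists_int_eq_of_forall_mul_self (hρ : ∀ g, ρ (g * g) = 1) (T : Finset G) {μ : K}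
    {v : V} (hv : v ≠ 0) (hμ : (∑ s ∈ T, ρ s) v = μ • v) : ∃ k : ℤ, μ = k :=
  Module.End.exists_int_eq_of_sum_involution_apply_eq_smul T ρ (fun s _ => by rw [← map_mul, hρ])
    (fun s _ t _ => commute_of_mul_self_eq_one (by rw [← map_mul, hρ]) (by rw [← map_mul, hρ])
      (by rw [← map_mul, ← map_mul, hρ])) hv hμ

theorem sum_eq_sum_filter_mul_self_eq_one [DecidableEq G] (hρz : ρ z = -1) (T : Finset G)
    (hT : ∀ s ∈ T, s⁻¹ ∈ T) (hsq : ∀ s ∈ T, s * s = 1 ∨ s * s = z) :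
    ∑ s ∈ T, ρ s = ∑ s ∈ T with s * s = 1, ρ s := by
  rw [← Finset.sum_filter_add_sum_filter_not T (fun s => s * s = 1), add_eq_left]
  refine Finset.sum_involution (fun s _ => s⁻¹) (fun s hs => ?_) (fun s hs _ hinv => ?_)
    (fun s hs => ?_) (fun s _ => inv_inv s)
  · obtain ⟨hsT, hs1⟩ := Finset.mem_filter.1 hs
    have hsz : s * s = z := (hsq s hsT).resolve_left hs1
    have : ρ s⁻¹ = -ρ s :=
      calc ρ s⁻¹ = -(ρ s⁻¹ * ρ z) := by rw [hρz, mul_neg, mul_one, neg_neg]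
        _ = -ρ s := by rw [← map_mul, ← hsz, inv_mul_cancel_left]
    rw [this, add_neg_cancel]
  · exact (Finset.mem_filter.1 hs).2 (inv_eq_iff_mul_eq_one.1 hinv)
  · obtain ⟨hsT, hs1⟩ := Finset.mem_filter.1 hs
    exact Finset.mem_filter.2 ⟨hT s hsT, by rwa [← mul_inv_rev, inv_eq_one]⟩

theorem exists_int_eq_of_sum_apply_eq_smul (hsq : ∀ g : G, g * g = 1 ∨ g * g = z)
    (hcenter : ∀ g : G, g * g = 1 → g ∈ Subgroup.center G) (T : Finset G)
    (hT : ∀ s ∈ T, s⁻¹ ∈ T) {μ : K} {v : V} (hv : v ≠ 0) (hμ : (∑ s ∈ T, ρ s) v = μ • v) :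
    ∃ k : ℤ, μ = k := by
  classical
  have hz2 : z * z = 1 := (hsq z).elim id fun h => by rw [mul_eq_left.1 h, mul_one]
  have hz := hcenter z hz2
  have hcomm : Commute (∑ s ∈ T, ρ s) (ρ z) := Commute.sum_left _ _ _ fun s _ => by
    rw [Commute, SemiconjBy, ← map_mul, ← map_mul, Subgroup.mem_center_iff.1 hz]
  obtain ⟨w, hw, hμw, hzw | hzw⟩ := Module.End.exists_apply_eq_smul_of_commute_involution
    (by rw [← map_mul, hz2, map_one]) hcomm hv hμ
  · obtain ⟨x, hx, hμx⟩ := ρ.exists_restrictEigenspace_sum_apply_eq_smul hz (ε := 1) hw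
      (by rw [hzw, one_smul]) T hμw
    refine exists_int_eq_of_forall_mul_self _ (fun g => ?_) T hx hμx
    rcases hsq g with h | h <;> rw [h]
    · exact map_one _
    · rw [restrictEigenspace_apply_center, one_smul]
  · obtain ⟨x, hx, hμx⟩ := ρ.exists_restrictEigenspace_sum_apply_eq_smul hz (ε := -1) hw
      (by rw [hzw, neg_one_smul]) T hμw
    set σ := ρ.restrictEigenspace hz (-1)
    have hσz : σ z = -1 := by
      rw [restrictEigenspace_apply_center]
      ext
      simp
    rw [sum_eq_sum_filter_mul_self_eq_one σ hσz T hT fun s _ => hsq s] at hμx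
    refine Module.End.exists_int_eq_of_sum_involution_apply_eq_smul _ σ (fun s hs => ?_)
      (fun s hs t _ => ?_) hx hμx
    · rw [← map_mul, (Finset.mem_filter.1 hs).2, map_one]
    · rw [Commute, SemiconjBy, ← map_mul, ← map_mul,
        Subgroup.mem_center_iff.1 (hcenter s (Finset.mem_filter.1 hs).2)]

end Representation

open TannakaDuality.FiniteGroup (leftRegular)

theorem toLin'_cayleyMatrix {G : Type} [Group G] [Fintype G] [DecidableEq G] (S : Finset G) :
    Matrix.toLin' (cayleyMatrix (S : Set G)) = ∑ s ∈ S, leftRegular s := by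
  refine LinearMap.ext fun v => funext fun x => ?_
  simp only [Matrix.toLin'_apply, LinearMap.sum_apply, Finset.sum_apply,
    TannakaDuality.FiniteGroup.leftRegular_apply, Matrix.mulVec, dotProduct, cayleyMatrix,
    Finset.mem_coe, ite_mul, one_mul, zero_mul]
  rw [Fintype.sum_equiv ((Equiv.inv G).trans (Equiv.mulLeft x)) _
    (fun s => if s ∈ S then v (s⁻¹ * x) else 0) fun y => by simp, Finset.sum_ite_mem,
    Finset.univ_inter]

theorem isIntegralMatrix_cayleyMatrix {G : Type} [Group G] [Finite G] (z : G)
    (hsq : ∀ g : G, g * g = 1 ∨ g * g = z) (hcenter : ∀ g : G, g * g = 1 → g ∈ Subgroup.center G)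
    (S : Set G) (hS : ∀ s ∈ S, s⁻¹ ∈ S) : isIntegralMatrix (cayleyMatrix S) := by
  classical
  let _ := Fintype.ofFinite G
  obtain ⟨T, rfl⟩ := S.toFinite.exists_finset_coe
  intro μ hμ
  obtain ⟨v, hv⟩ := hμ.exists_hasEigenvector
  rw [toLin'_cayleyMatrix] at hv
  exact leftRegular.exists_int_eq_of_sum_apply_eq_smul hsq hcenter T hS hv.2 hv.apply_eq_smul

theorem Prod.mul_self_eq_one_or_eq {H E : Type*} [Group H] [Group E] {z : H}
    (hsq : ∀ g : H, g * g = 1 ∨ g * g = z) (hE : ∀ v : E, v * v = 1) (g : H × E) :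
    g * g = 1 ∨ g * g = (z, 1) :=
  (hsq g.1).imp (fun h => Prod.ext h (hE g.2)) fun h => Prod.ext h (hE g.2)

theorem Prod.mem_center_of_mul_self_eq_one {H E : Type*} [Group H] [CommGroup E]
    (hcenter : ∀ g : H, g * g = 1 → g ∈ Subgroup.center H) (g : H × E) (hg : g * g = 1) :
    g ∈ Subgroup.center (H × E) :=
  Subgroup.mem_center_iff.2 fun h =>
    Prod.ext (Subgroup.mem_center_iff.1 (hcenter g.1 (congrArg Prod.fst hg)) h.1) (mul_comm _ _)

namespace QuaternionGroup

theorem mul_self_eq_one_or_eq_a_two (g : QuaternionGroup 2) : g * g = 1 ∨ g * g = a 2 := by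
  revert g; decide

theorem mem_center_of_mul_self_eq_one (g : QuaternionGroup 2) (hg : g * g = 1) :
    g ∈ Subgroup.center (QuaternionGroup 2) := by
  rw [Subgroup.mem_center_iff]; revert g hg; decide

end QuaternionGroup

theorem mul_self_eq_one_of_zmod_two {ι : Type*} (v : Multiplicative (ι → ZMod 2)) : v * v = 1 :=
  funext fun i => CharTwo.add_self_eq_zero (v.toAdd i)

theorem quaternion_times_elementary_abelian_cayley_integral (d : ℕ) :
    ∀ S : Set (QuaternionGroup 2 × Multiplicative (Fin d → ZMod 2)),
      (∀ s ∈ S, s⁻¹ ∈ S) →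
      (1 : QuaternionGroup 2 × Multiplicative (Fin d → ZMod 2)) ∉ S →
      isIntegralMatrix (cayleyMatrix S) := fun S hS _ =>
  isIntegralMatrix_cayleyMatrix _
    (Prod.mul_self_eq_one_or_eq QuaternionGroup.mul_self_eq_one_or_eq_a_two
      mul_self_eq_one_of_zmod_two)
    (Prod.mem_center_of_mul_self_eq_one QuaternionGroup.mem_center_of_mul_self_eq_one) S hS
end

section
/- The group Q8 × Z/4 admits a symmetric subset S of size 4 such that the Cayley graph Cay(Q8 × Z/4, S) has irrational eigenvalues ±2√2. -/
/-!
Let `ρ` be the real representation of `Q₈ × ℤ/4` on the quaternions `ℍ` in which `Q₈ = ⟨i, j⟩`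
acts by left and the generator `t` of `ℤ/4` by right multiplication with `i`; it is the
realification of the representation `(a, tʲ) ↦ iʲ π(a)`. For `S = {(x, t), (x⁻¹, t⁻¹), (y, t),
(y⁻¹, t⁻¹)}` the operator `∑ s ∈ S, ρ s` is `h ↦ 2 (i + j) h i`, whose square is multiplication
by `8`, so it has the eigenvalues `±2√2`. Any eigenvalue of `∑ s ∈ S, ρ s` is an eigenvalue of
the Cayley graph: a coordinate of `g ↦ ρ g⁻¹ w` is an eigenfunction when `w` is an eigenvector.
-/

open Matrix
open scoped Quaternion

theorem cayleyMatrix_mulVec {G : Type*} [Group G] [Fintype G]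
    (S : Finset G) (v : G → ℝ) (x : G) :
    (cayleyMatrix (S : Set G) *ᵥ v) x = ∑ s ∈ S, v (s⁻¹ * x) := by
  classical
  calc (cayleyMatrix (S : Set G) *ᵥ v) x
      = ∑ y, if x * y⁻¹ ∈ S then v y else 0 := by
        simp [cayleyMatrix, Matrix.mulVec, dotProduct]
    _ = ∑ s, if s ∈ S then v (s⁻¹ * x) else 0 :=
        Fintype.sum_equiv ((Equiv.inv G).trans (Equiv.mulLeft x)) _ _ (fun y => by simp)
    _ = ∑ s ∈ S, v (s⁻¹ * x) := by simp [Finset.sum_ite_mem]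

theorem hasEigenvalue_cayleyMatrix_of_sum_apply_eq_smul {G V : Type*} [Group G] [Fintype G]
    [DecidableEq G] [AddCommGroup V] [Module ℝ V] (ρ : Representation ℝ G V) (S : Finset G)
    {μ : ℝ} {w : V} (hw : w ≠ 0) (hS : ∑ s ∈ S, ρ s w = μ • w) :
    Module.End.HasEigenvalue (Matrix.toLin' (cayleyMatrix (S : Set G))) μ := by
  obtain ⟨ℓ, hℓ⟩ := Module.Projective.exists_dual_ne_zero ℝ hw
  refine Module.End.hasEigenvalue_of_hasEigenvector (x := fun x => ℓ (ρ x⁻¹ w)) ⟨?_, ?_⟩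
  · rw [Module.End.mem_eigenspace_iff]
    funext x
    calc (cayleyMatrix (S : Set G) *ᵥ fun x => ℓ (ρ x⁻¹ w)) x
        = ℓ (ρ x⁻¹ (∑ s ∈ S, ρ s w)) := by
          simp [cayleyMatrix_mulVec, map_sum, ← Module.End.mul_apply, ← map_mul]
      _ = μ * ℓ (ρ x⁻¹ w) := by rw [hS, map_smul, map_smul, smul_eq_mul]
  · exact fun h => hℓ (by simpa using congrFun h 1)

def ZMod.powersHom {M : Type*} [Monoid M] (n : ℕ) [NeZero n] (x : M) (hx : x ^ n = 1) :
    Multiplicative (ZMod n) →* M where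
  toFun k := x ^ k.toAdd.val
  map_one' := by simp
  map_mul' k l := by
    rw [toAdd_mul, ZMod.val_add, ← pow_add]
    calc x ^ ((k.toAdd.val + l.toAdd.val) % n)
        = (x ^ n) ^ ((k.toAdd.val + l.toAdd.val) / n) * x ^ ((k.toAdd.val + l.toAdd.val) % n) := by
          rw [hx, one_pow, one_mul]
      _ = x ^ (k.toAdd.val + l.toAdd.val) := by rw [← pow_mul, ← pow_add, Nat.div_add_mod]

def QuaternionGroup.lift {M : Type*} [Monoid M] {n : ℕ} (ψ : Multiplicative (ZMod (2 * n)) →* M)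
    (v : M) (hv : v * v = ψ (.ofAdd n)) (hψv : ∀ k, ψ k * v = v * ψ k⁻¹) :
    QuaternionGroup n →* M where
  toFun
    | .a k => ψ (.ofAdd k)
    | .xa k => v * ψ (.ofAdd k)
  map_one' := by rw [QuaternionGroup.one_def]; simp
  map_mul' := by
    rintro (i | i) (j | j)
    · simp [← map_mul, ← ofAdd_add]
    · simp only [QuaternionGroup.a_mul_xa]
      rw [← mul_assoc, hψv, mul_assoc, ← map_mul, sub_eq_neg_add]; rfl
    · simp [mul_assoc, ← map_mul, ← ofAdd_add]
    · simp only [QuaternionGroup.xa_mul_xa]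
      rw [mul_assoc, ← mul_assoc (ψ _), hψv, ← mul_assoc, ← mul_assoc, hv, mul_assoc, ← map_mul,
        ← map_mul, add_sub_assoc, sub_eq_neg_add]; rfl

def Representation.mulLeftRight {R G H A : Type*} [CommSemiring R] [Monoid G] [CommMonoid H]
    [Semiring A] [Algebra R A] (φ : G →* A) (ψ : H →* A) : Representation R (G × H) A where
  toFun g := LinearMap.mulLeftRight R (φ g.1, ψ g.2)
  map_one' := by ext; simp
  map_mul' g h := by
    ext x
    simp only [Module.End.mul_apply, LinearMap.mulLeftRight_apply, Prod.fst_mul, Prod.snd_mul,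
      mul_comm g.2, map_mul, mul_assoc]

@[simps] noncomputable def quaternionI : ℍ[ℝ] := ⟨0, 1, 0, 0⟩
@[simps] noncomputable def quaternionJ : ℍ[ℝ] := ⟨0, 0, 1, 0⟩

theorem quaternionI_pow_four : quaternionI ^ 4 = 1 := by
  ext <;> simp [pow_succ]

noncomputable def quaternionIPowers : Multiplicative (ZMod 4) →* ℍ[ℝ] :=
  ZMod.powersHom 4 quaternionI quaternionI_pow_four

theorem quaternionIPowers_ofAdd (k : ZMod 4) :
    quaternionIPowers (.ofAdd k) = quaternionI ^ k.val := rfl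

theorem quaternionJ_mul_self :
    quaternionJ * quaternionJ = quaternionIPowers (.ofAdd ((2 : ℕ) : ZMod 4)) := by
  rw [quaternionIPowers_ofAdd, show ((2 : ℕ) : ZMod 4).val = 2 from rfl]
  ext <;> simp [sq]

theorem quaternionJ_mul_inv_quaternionI :
    quaternionJ * quaternionI⁻¹ = quaternionI * quaternionJ := by
  ext <;> simp [Quaternion.inv_def, Quaternion.normSq_def']

theorem quaternionIPowers_mul_quaternionJ (k : Multiplicative (ZMod 4)) :
    quaternionIPowers k * quaternionJ = quaternionJ * quaternionIPowers k⁻¹ := by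
  have hinv : quaternionIPowers k⁻¹ = (quaternionIPowers k)⁻¹ :=
    eq_inv_of_mul_eq_one_left (by rw [← map_mul, inv_mul_cancel, map_one])
  rw [hinv]
  change quaternionI ^ _ * _ = _ * (quaternionI ^ _)⁻¹
  rw [← inv_pow]
  exact ((SemiconjBy.pow_right quaternionJ_mul_inv_quaternionI _).eq).symm

noncomputable def quaternionGroupToQuaternion : QuaternionGroup 2 →* ℍ[ℝ] :=
  QuaternionGroup.lift quaternionIPowers quaternionJ quaternionJ_mul_self
    quaternionIPowers_mul_quaternionJ

noncomputable def quaternionRepresentation :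
    Representation ℝ (QuaternionGroup 2 × Multiplicative (ZMod 4)) ℍ[ℝ] :=
  .mulLeftRight quaternionGroupToQuaternion quaternionIPowers

open QuaternionGroup in
/-- The set `{(x, t), (x⁻¹, t⁻¹), (y, t), (y⁻¹, t⁻¹)}` with `x = a 1`, `y = xa 0`, `t = ofAdd 1`. -/
def cayleyGenerators : Finset (QuaternionGroup 2 × Multiplicative (ZMod 4)) :=
  {(a 1, .ofAdd 1), (a (-1), .ofAdd (-1)), (xa 0, .ofAdd 1), (xa 2, .ofAdd (-1))}

theorem sum_quaternionRepresentation_cayleyGenerators (h : ℍ[ℝ]) :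
    ∑ s ∈ cayleyGenerators, quaternionRepresentation s h =
      (2 : ℝ) • ((quaternionI + quaternionJ) * h * quaternionI) := by
  rw [cayleyGenerators, Finset.sum_insert (by decide), Finset.sum_insert (by decide),
    Finset.sum_insert (by decide), Finset.sum_singleton]
  change quaternionI ^ 1 * h * quaternionI ^ 1 + (quaternionI ^ 3 * h * quaternionI ^ 3 +
    (quaternionJ * quaternionI ^ 0 * h * quaternionI ^ 1 +
      quaternionJ * quaternionI ^ 2 * h * quaternionI ^ 3)) = _
  ext <;> simp [pow_succ] <;> ring

-- `T h = (i + j) h i` satisfies `T² = 2` because `(i + j)² = -2 = 2 i²`, so `T 1 + t` is a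
-- `t`-eigenvector of `T`.
theorem quaternionI_add_quaternionJ_mul_mul_quaternionI {t : ℝ} (ht : t ^ 2 = 2) :
    (quaternionI + quaternionJ) * ((quaternionI + quaternionJ) * quaternionI + t) * quaternionI =
      t • ((quaternionI + quaternionJ) * quaternionI + t) := by
  ext <;> simp
  linear_combination -ht

theorem quaternionI_add_quaternionJ_mul_quaternionI_add_ne_zero (t : ℝ) :
    (quaternionI + quaternionJ) * quaternionI + (t : ℍ[ℝ]) ≠ 0 := by
  intro h
  simpa using congrArg QuaternionAlgebra.imK h

theorem hasEigenvalue_cayleyMatrix_cayleyGenerators {t : ℝ} (ht : t ^ 2 = 2) :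
    Module.End.HasEigenvalue
      (Matrix.toLin' (cayleyMatrix
        (cayleyGenerators : Set (QuaternionGroup 2 × Multiplicative (ZMod 4))))) (2 * t) :=
  hasEigenvalue_cayleyMatrix_of_sum_apply_eq_smul quaternionRepresentation cayleyGenerators
    (quaternionI_add_quaternionJ_mul_quaternionI_add_ne_zero t)
    (by rw [sum_quaternionRepresentation_cayleyGenerators,
      quaternionI_add_quaternionJ_mul_mul_quaternionI ht, smul_smul])

theorem quaternion_times_Z4_irrational_eigenvalue :
    ∃ S : Finset (QuaternionGroup 2 × Multiplicative (ZMod 4)),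
      S.card = 4 ∧ (∀ s ∈ S, s⁻¹ ∈ S) ∧
      (1 : QuaternionGroup 2 × Multiplicative (ZMod 4)) ∉ S ∧
      Irrational (2 * Real.sqrt 2) ∧
      Module.End.HasEigenvalue
        (Matrix.toLin' (cayleyMatrix (S : Set (QuaternionGroup 2 × Multiplicative (ZMod 4)))))
        (2 * Real.sqrt 2) ∧
      Module.End.HasEigenvalue
        (Matrix.toLin' (cayleyMatrix (S : Set (QuaternionGroup 2 × Multiplicative (ZMod 4)))))
        (-(2 * Real.sqrt 2)) := by
  have hsq : Real.sqrt 2 ^ 2 = 2 := Real.sq_sqrt zero_le_two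
  refine ⟨cayleyGenerators, by decide, by decide, by decide, ?_,
    hasEigenvalue_cayleyMatrix_cayleyGenerators hsq, ?_⟩
  · simpa using irrational_sqrt_two.natCast_mul (m := 2) two_ne_zero
  · rw [← mul_neg]
    exact hasEigenvalue_cayleyMatrix_cayleyGenerators (by rwa [neg_sq])
end

section
/- Let G be a finite group with a symmetric generating subset S not containing the identity. The Cayley graph Cay(G,S) is a complete multipartite graph if and only if G \ (S ∪ {1}) together with 1 forms a subgroup of G (equivalently, S is the complement of a subgroup). -/
theorem cayley_complete_multipartite_iff_complement_subgroup
    (G : Type*) [Group G] [Fintype G] (S : Set G)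
    (hsym : ∀ s ∈ S, s⁻¹ ∈ S) (h1 : (1 : G) ∉ S)
    (hgen : Subgroup.closure S = ⊤) :
    (∃ (ι : Type) (f : G → ι), ∀ x y : G, x * y⁻¹ ∈ S ↔ f x ≠ f y) ↔
      ∃ H : Subgroup G, S = (H : Set G)ᶜ := by
  constructor
  · rintro ⟨ι, f, hf⟩
    have key : ∀ x : G, x ∉ S ↔ f x = f 1 := by
      intro x
      have := hf x 1
      simp only [inv_one, mul_one] at this
      rw [this]; tauto
    refine ⟨{ carrier := Sᶜ
              one_mem' := h1
              inv_mem' := by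
                intro x hx hxi
                exact hx (by simpa using hsym _ hxi)
              mul_mem' := by
                intro a b ha hb
                rw [Set.mem_compl_iff, key] at ha hb ⊢
                have h3 : f (a * b) = f b := by
                  have := hf (a * b) b
                  simp only [mul_inv_cancel_right] at this
                  by_contra hne
                  exact (Set.mem_compl_iff S a).mp ((key a).mpr ha) (this.mpr hne)
                rw [h3, hb] }, by simp⟩
  · rintro ⟨H, rfl⟩
    classical
    let e := Fintype.equivFin (G ⧸ H)
    refine ⟨Fin (Fintype.card (G ⧸ H)), fun x => e ((x⁻¹ : G) : G ⧸ H), fun x y => ?_⟩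
    simp only [Set.mem_compl_iff, SetLike.mem_coe, ne_eq]
    rw [not_iff_not, EmbeddingLike.apply_eq_iff_eq, QuotientGroup.eq]
    simp
end
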